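/- arXiv:cs/0610080 — 4 statements merged into one kernel-verified Lean document; each statement's English description precedes it below -/
import Mathlib

section
/- Let x : ℕ → ℝ^d be a uniformly computable sequence of points, and let A ⊆ ℝ^d be the set of accumulation points of the sequence (x n). Then every isolated point of A (i.e., every point z ∈ A such that the singleton {z} is open in the subspace topology of A) is naively computable. -/
noncomputable def ratToPt (d : ℕ) (q : Fin d → ℚ) : EuclideanSpace ℝ (Fin d) :=
  WithLp.toLp 2 (fun i => (q i : ℝ))

/-- `x ∈ ℝ^d` is a computable point. -/
def IsComputablePoint {d : ℕ} (x : EuclideanSpace ℝ (Fin d)) : Prop :=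
  ∃ q : ℕ → (Fin d → ℚ), Computable q ∧
    ∀ n : ℕ, ‖x - ratToPt d (q n)‖ ≤ (2 : ℝ) ^ (-(n : ℤ))

/-- `U ⊆ ℝ^d` is r.e. open. -/
def IsREOpen {d : ℕ} (U : Set (EuclideanSpace ℝ (Fin d))) : Prop :=
  ∃ c : ℕ → (Fin d → ℚ), ∃ r : ℕ → ℚ, Computable c ∧ Computable r ∧
    U = ⋃ n : ℕ, Metric.ball (ratToPt d (c n)) ((r n : ℝ))

/-- `A ⊆ ℝ^d` is co-r.e. closed. -/
def IsCoREClosed {d : ℕ} (A : Set (EuclideanSpace ℝ (Fin d))) : Prop :=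
  IsClosed A ∧ IsREOpen Aᶜ

/-- `A ⊆ ℝ^d` is r.e. closed. -/
def IsREClosed {d : ℕ} (A : Set (EuclideanSpace ℝ (Fin d))) : Prop :=
  IsClosed A ∧ ∃ x : ℕ → EuclideanSpace ℝ (Fin d), ∃ q : ℕ → ℕ → (Fin d → ℚ),
    Computable₂ q ∧ (∀ n m : ℕ, ‖x n - ratToPt d (q n m)‖ ≤ (2 : ℝ) ^ (-(m : ℤ))) ∧
    A = closure (Set.range x)

/-- naively computable point of ℝ^d -/
def IsNaivelyComputable {d : ℕ} (x : EuclideanSpace ℝ (Fin d)) : Prop :=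
  ∃ q : ℕ → (Fin d → ℚ), Computable q ∧
    Filter.Tendsto (fun n => ratToPt d (q n)) Filter.atTop (nhds x)

/-- accumulation point of a sequence in ℝ^d -/
def IsSeqAccPt {d : ℕ} (x : ℕ → EuclideanSpace ℝ (Fin d)) (z : EuclideanSpace ℝ (Fin d)) : Prop :=
  ∀ ε : ℝ, 0 < ε → {n : ℕ | ‖x n - z‖ < ε}.Infinite

-- real-line versions
def IsComputablePointR (x : ℝ) : Prop :=
  ∃ q : ℕ → ℚ, Computable q ∧ ∀ n : ℕ, |x - (q n : ℝ)| ≤ (2 : ℝ) ^ (-(n : ℤ))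

def IsREOpenR (U : Set ℝ) : Prop :=
  ∃ c : ℕ → ℚ, ∃ r : ℕ → ℚ, Computable c ∧ Computable r ∧
    U = ⋃ n : ℕ, Set.Ioo ((c n : ℝ) - (r n : ℝ)) ((c n : ℝ) + (r n : ℝ))

def IsCoREClosedR (A : Set ℝ) : Prop := IsClosed A ∧ IsREOpenR Aᶜ

def IsREClosedR (A : Set ℝ) : Prop :=
  IsClosed A ∧ ∃ x : ℕ → ℝ, ∃ q : ℕ → ℕ → ℚ,
    Computable₂ q ∧ (∀ n m : ℕ, |x n - (q n m : ℝ)| ≤ (2 : ℝ) ^ (-(m : ℤ))) ∧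
    A = closure (Set.range x)

def IsNaivelyComputableR (x : ℝ) : Prop :=
  ∃ q : ℕ → ℚ, Computable q ∧ Filter.Tendsto (fun n => (q n : ℝ)) Filter.atTop (nhds x)

def IsSeqAccPtR (x : ℕ → ℝ) (z : ℝ) : Prop :=
  ∀ ε : ℝ, 0 < ε → {n : ℕ | |x n - z| < ε}.Infinite

namespace Stmt7Aux
open Encodable Filter

def allb (l : List Bool) : Bool := l.foldr and true

lemma allb_iff (l : List Bool) : allb l = true ↔ ∀ b ∈ l, b = true := by
  induction l with
  | nil => simp [allb]
  | cons a l ih => simp only [allb, List.foldr_cons, Bool.and_eq_true, List.mem_cons] at *; aesop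

lemma allb_primrec : Primrec allb :=
  (Primrec.list_foldr Primrec.id (Primrec.const true)
    (Primrec.and.comp (Primrec.fst.comp Primrec.snd) (Primrec.snd.comp Primrec.snd)).to₂).of_eq
    fun _ => rfl

def natAbsCode (a : ℕ) : ℕ := if a % 2 = 0 then a / 2 else a / 2 + 1
def posCode (a : ℕ) : ℕ := if a % 2 = 0 then a / 2 else 0
def negCode (a : ℕ) : ℕ := if a % 2 = 0 then 0 else a / 2 + 1

def eZ (z : ℤ) : ℕ := Equiv.intEquivNat z
def e0 (v : ℚ) : ℕ := Nat.pair (eZ v.num) v.den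

lemma eZ_ofNat (m : ℕ) : eZ (m : ℤ) = 2 * m := rfl
lemma eZ_negSucc (m : ℕ) : eZ (Int.negSucc m) = 2 * m + 1 := rfl

lemma two_mul_div (m : ℕ) : 2 * m / 2 = m := by omega
lemma two_mul_succ_div (m : ℕ) : (2 * m + 1) / 2 = m := by omega
lemma two_mul_succ_mod (m : ℕ) : (2 * m + 1) % 2 = 1 := by omega

lemma posCode_eZ (z : ℤ) : (posCode (eZ z) : ℤ) - negCode (eZ z) = z := by
  cases z with
  | ofNat m => simp [eZ_ofNat, posCode, negCode, two_mul_div, Nat.mul_mod_right]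
  | negSucc m =>
    simp only [eZ_negSucc, posCode, negCode, two_mul_succ_mod, two_mul_succ_div]
    rw [Int.negSucc_eq]
    push_cast
    ring

lemma natAbsCode_eZ (z : ℤ) : natAbsCode (eZ z) = z.natAbs := by
  cases z with
  | ofNat m => simp [eZ_ofNat, natAbsCode, two_mul_div, Nat.mul_mod_right]
  | negSucc m => simp [eZ_negSucc, natAbsCode, two_mul_succ_mod, two_mul_succ_div]

lemma natAbsCode_primrec : Primrec natAbsCode :=
  Primrec.ite (Primrec.eq.comp (Primrec.nat_mod.comp .id (.const 2)) (.const 0))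
    (Primrec.nat_div.comp .id (.const 2))
    (Primrec.succ.comp (Primrec.nat_div.comp .id (.const 2)))

lemma posCode_primrec : Primrec posCode :=
  Primrec.ite (Primrec.eq.comp (Primrec.nat_mod.comp .id (.const 2)) (.const 0))
    (Primrec.nat_div.comp .id (.const 2)) (.const 0)

lemma negCode_primrec : Primrec negCode :=
  Primrec.ite (Primrec.eq.comp (Primrec.nat_mod.comp .id (.const 2)) (.const 0))
    (.const 0) (Primrec.succ.comp (Primrec.nat_div.comp .id (.const 2)))

/-- coprimality test, correct for `b ≠ 0` -/
def cop (m b : ℕ) : Bool :=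
  allb ((List.range (b + 1)).map fun k => decide ((m % k = 0 ∧ b % k = 0) → k = 1))

lemma cop_iff {m b : ℕ} (hb : b ≠ 0) : cop m b = true ↔ Nat.Coprime m b := by
  rw [cop, allb_iff]
  constructor
  · intro h
    have hg : Nat.gcd m b ∣ b := Nat.gcd_dvd_right m b
    have hgm : Nat.gcd m b ∣ m := Nat.gcd_dvd_left m b
    have hgle : Nat.gcd m b < b + 1 := Nat.lt_succ_of_le (Nat.le_of_dvd (Nat.pos_of_ne_zero hb) hg)
    have h2 := h _ (List.mem_map_of_mem (List.mem_range.2 hgle))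
    rw [decide_eq_true_eq] at h2
    exact h2 ⟨Nat.dvd_iff_mod_eq_zero.mp hgm, Nat.dvd_iff_mod_eq_zero.mp hg⟩
  · intro h x hx
    obtain ⟨k, -, rfl⟩ := List.mem_map.1 hx
    rw [decide_eq_true_eq]
    rintro ⟨hkm, hkb⟩
    rcases Nat.eq_zero_or_pos k with rfl | hkpos
    · simp at hkb; exact absurd hkb hb
    · have : k ∣ Nat.gcd m b := Nat.dvd_gcd (Nat.dvd_of_mod_eq_zero hkm) (Nat.dvd_of_mod_eq_zero hkb)
      rw [h] at this
      exact Nat.eq_one_of_dvd_one this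


lemma computable_nat_find {α : Type*} [Primcodable α] {p : α → ℕ → Bool}
    (hp : Computable₂ p) (H : ∀ a, ∃ n, p a n = true) :
    Computable fun a => Nat.find (H a) := by
  have hpart : Partrec₂ fun (a : α) (n : ℕ) => (Part.some (p a n) : Part Bool) :=
    Computable₂.partrec₂ hp
  refine (Partrec.rfind hpart).of_eq_tot fun a => ?_
  refine Nat.mem_rfind.2 ?_
  constructor
  · exact Part.mem_some_iff.2 (Nat.find_spec (H a)).symm
  · intro m hm
    have : p a m = false := by
      have := Nat.find_min (H a) hm
      exact Bool.not_eq_true _ ▸ this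
    exact Part.mem_some_iff.2 this.symm


lemma cop_primrec : Primrec₂ cop := by
  have hinner : Primrec₂ fun (p : ℕ × ℕ) (k : ℕ) =>
      decide ((p.1 % k = 0 ∧ p.2 % k = 0) → k = 1) := by
    have hA : PrimrecRel fun (p : ℕ × ℕ) (k : ℕ) => p.1 % k = 0 ∧ p.2 % k = 0 :=
      PrimrecPred.and
        (Primrec.eq.comp (Primrec.nat_mod.comp (Primrec.fst.comp .fst) .snd) (.const 0))
        (Primrec.eq.comp (Primrec.nat_mod.comp (Primrec.snd.comp .fst) .snd) (.const 0))
    have hB : PrimrecRel fun (p : ℕ × ℕ) (k : ℕ) => k = 1 :=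
      Primrec.eq.comp Primrec.snd (Primrec.const 1)
    exact PrimrecRel.decide (R := fun (p : ℕ × ℕ) (k : ℕ) => (p.1 % k = 0 ∧ p.2 % k = 0) → k = 1)
      ((PrimrecPred.or (PrimrecPred.not hA) hB).of_eq (by tauto))
  have hrange : Primrec fun p : ℕ × ℕ => List.range (p.2 + 1) :=
    Primrec.list_range.comp (Primrec.succ.comp Primrec.snd)
  have hmap := Primrec.list_map hrange hinner
  exact Primrec₂.mk (allb_primrec.comp hmap)

def memR (j : ℕ) : Bool := decide (j.unpair.2 ≠ 0) && cop (natAbsCode j.unpair.1) j.unpair.2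

lemma memR_primrec : Primrec memR := by
  have h1 : Primrec fun j : ℕ => j.unpair.1 := Primrec.fst.comp Primrec.unpair
  have h2 : Primrec fun j : ℕ => j.unpair.2 := Primrec.snd.comp Primrec.unpair
  have hx : Primrec fun j : ℕ => decide (j.unpair.2 ≠ 0) := by
    have : PrimrecPred fun j : ℕ => ¬(j.unpair.2 = 0) :=
      PrimrecPred.not (Primrec.eq.comp h2 (.const 0))
    exact PrimrecPred.decide (p := fun j : ℕ => j.unpair.2 ≠ 0) this
  have hy : Primrec fun j : ℕ => cop (natAbsCode j.unpair.1) j.unpair.2 :=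
    cop_primrec.comp (natAbsCode_primrec.comp h1) h2
  exact (Primrec.and.comp hx hy).of_eq fun j => rfl

lemma memR_iff (j : ℕ) : memR j = true ↔ ∃ v : ℚ, e0 v = j := by
  constructor
  · intro h
    rw [memR, Bool.and_eq_true, decide_eq_true_eq] at h
    obtain ⟨hb, hcop⟩ := h
    set a := j.unpair.1
    set b := j.unpair.2
    obtain ⟨zi, hzi⟩ := (Equiv.intEquivNat).surjective a
    have hez : eZ zi = a := hzi
    have hcop' : (zi.natAbs).Coprime b := by
      rw [← natAbsCode_eZ]
      exact (cop_iff hb).1 (by rw [hez]; exact hcop)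
    refine ⟨⟨zi, b, hb, hcop'⟩, ?_⟩
    show Nat.pair (eZ zi) b = j
    rw [hez]
    exact Nat.pair_unpair j
  · rintro ⟨v, rfl⟩
    rw [memR, Bool.and_eq_true, decide_eq_true_eq]
    rw [e0, Nat.unpair_pair]
    refine ⟨v.den_nz, ?_⟩
    rw [natAbsCode_eZ, cop_iff v.den_nz]
    exact v.reduced

def cntR (j : ℕ) : ℕ := (List.range j).countP memR

lemma foldr_count (l : List ℕ) :
    l.foldr (fun i acc => bif memR i then acc + 1 else acc) 0 = l.countP memR := by
  induction l with
  | nil => simp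
  | cons a l ih =>
    rw [List.foldr_cons, List.countP_cons, ih]
    cases h : memR a <;> simp [h]

lemma cntR_primrec : Primrec cntR := by
  have hh : Primrec fun p : ℕ × ℕ × ℕ => bif memR p.2.1 then p.2.2 + 1 else p.2.2 :=
    Primrec.cond (memR_primrec.comp (Primrec.fst.comp Primrec.snd))
      (Primrec.succ.comp (Primrec.snd.comp Primrec.snd))
      (Primrec.snd.comp Primrec.snd)
  have := Primrec.list_foldr Primrec.list_range (Primrec.const 0) hh.to₂
  exact this.of_eq fun j => by simpa [cntR] using foldr_count (List.range j)

lemma encode_eq_cntR (v : ℚ) :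
    @encode ℚ (Primcodable.ofDenumerable ℚ).toEncodable v = cntR (e0 v) := by
  have h0 : @encode ℚ (Primcodable.ofDenumerable ℚ).toEncodable v
      = (List.range (@encode ℚ Rat.instEncodable v)).countP
          fun j => @decide (j ∈ Set.range (@encode ℚ Rat.instEncodable))
            (Encodable.decidableRangeEncode ℚ j) := rfl
  have h2 : @encode ℚ Rat.instEncodable v = e0 v := rfl
  rw [h0, h2, cntR]
  refine List.countP_congr fun j _ => ?_
  rw [@decide_eq_true_eq _ (Encodable.decidableRangeEncode ℚ j), memR_iff j]
  exact ⟨fun ⟨w, hw⟩ => ⟨w, hw⟩, fun ⟨w, hw⟩ => ⟨w, hw⟩⟩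

def encQ (v : ℚ) : ℕ := @encode ℚ (Primcodable.ofDenumerable ℚ).toEncodable v

lemma encQ_eq (v : ℚ) : encQ v = cntR (e0 v) := encode_eq_cntR v

lemma encQ_inj : Function.Injective encQ :=
  @Encodable.encode_injective ℚ (Primcodable.ofDenumerable ℚ).toEncodable

lemma encQ_ofNat (k : ℕ) : encQ (Denumerable.ofNat ℚ k) = k :=
  @Denumerable.encode_ofNat ℚ _ k

def Ufind (k j : ℕ) : Bool := memR j && decide (cntR j = k)

lemma exists_Ufind (k : ℕ) : ∃ j, Ufind k j = true := by
  refine ⟨e0 (Denumerable.ofNat ℚ k), ?_⟩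
  rw [Ufind, Bool.and_eq_true, decide_eq_true_eq]
  exact ⟨(memR_iff _).2 ⟨_, rfl⟩, by rw [← encQ_eq, encQ_ofNat]⟩

def unrank (k : ℕ) : ℕ := Nat.find (exists_Ufind k)

lemma unrank_computable : Computable unrank := by
  have hU : Computable₂ Ufind := by
    have : Primrec₂ Ufind := by
      have h1 : Primrec fun p : ℕ × ℕ => memR p.2 := memR_primrec.comp Primrec.snd
      have h2 : Primrec fun p : ℕ × ℕ => decide (cntR p.2 = p.1) :=
        (Primrec.eq.comp (cntR_primrec.comp Primrec.snd) Primrec.fst).decide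
      exact (Primrec.and.comp h1 h2).of_eq fun p => rfl
    exact this.to_comp
  exact computable_nat_find hU exists_Ufind

lemma unrank_encQ (v : ℚ) : unrank (encQ v) = e0 v := by
  have hspec := Nat.find_spec (exists_Ufind (encQ v))
  rw [Ufind, Bool.and_eq_true, decide_eq_true_eq] at hspec
  obtain ⟨hmem, hcnt⟩ := hspec
  obtain ⟨w, hw⟩ := (memR_iff _).1 hmem
  have hwv : w = v := encQ_inj (by rw [encQ_eq, hw, hcnt])
  show Nat.find (exists_Ufind (encQ v)) = e0 v
  rw [hwv] at hw
  exact hw.symm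

def ctest (cp cnn cd rn rd : ℕ) (k : ℕ) : Bool :=
  decide (max ((posCode (unrank k).unpair.1 * cd + cnn * (unrank k).unpair.2)
        - (negCode (unrank k).unpair.1 * cd + cp * (unrank k).unpair.2))
      ((negCode (unrank k).unpair.1 * cd + cp * (unrank k).unpair.2)
        - (posCode (unrank k).unpair.1 * cd + cnn * (unrank k).unpair.2)) * rd
    ≤ rn * ((unrank k).unpair.2 * cd))


lemma ctest_computable (cp cnn cd rn rd : ℕ) : Computable (ctest cp cnn cd rn rd) := by
  have hu : Computable unrank := unrank_computable
  have ha : Computable fun k : ℕ => (unrank k).unpair.1 :=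
    (Primrec.fst.comp Primrec.unpair).to_comp.comp hu
  have hb : Computable fun k : ℕ => (unrank k).unpair.2 :=
    (Primrec.snd.comp Primrec.unpair).to_comp.comp hu
  have hA : Computable fun k : ℕ =>
      posCode (unrank k).unpair.1 * cd + cnn * (unrank k).unpair.2 :=
    Primrec.nat_add.to_comp.comp
      (Primrec.nat_mul.to_comp.comp (posCode_primrec.to_comp.comp ha) (Computable.const cd))
      (Primrec.nat_mul.to_comp.comp (Computable.const cnn) hb)
  have hB : Computable fun k : ℕ =>
      negCode (unrank k).unpair.1 * cd + cp * (unrank k).unpair.2 :=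
    Primrec.nat_add.to_comp.comp
      (Primrec.nat_mul.to_comp.comp (negCode_primrec.to_comp.comp ha) (Computable.const cd))
      (Primrec.nat_mul.to_comp.comp (Computable.const cp) hb)
  have hlhs := Primrec.nat_mul.to_comp.comp
      (Primrec.nat_max.to_comp.comp
        (Primrec.nat_sub.to_comp.comp hA hB) (Primrec.nat_sub.to_comp.comp hB hA))
      (Computable.const rd)
  have hrhs := Primrec.nat_mul.to_comp.comp (Computable.const rn)
      (Primrec.nat_mul.to_comp.comp hb (Computable.const cd))
  exact (Primrec.nat_le.decide.to_comp.comp hlhs hrhs).of_eq fun k => rfl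

lemma ctest_iff (c ρ : ℚ) (hρ : 0 ≤ ρ) (v : ℚ) :
    ctest c.num.toNat (-c.num).toNat c.den ρ.num.toNat ρ.den (encQ v) = true
      ↔ |v - c| ≤ ρ := by
  rw [ctest, unrank_encQ, decide_eq_true_eq, e0, Nat.unpair_pair]
  simp only []
  set P := posCode (eZ v.num) with hPdef
  set N := negCode (eZ v.num) with hNdef
  set A := P * c.den + (-c.num).toNat * v.den with hAdef
  set B := N * c.den + c.num.toNat * v.den with hBdef
  have hPN : (P : ℤ) - N = v.num := posCode_eZ v.num
  have hcpn : (c.num.toNat : ℤ) - (-c.num).toNat = c.num := by omega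
  have hABZ : (A : ℤ) - B = v.num * c.den - c.num * v.den := by
    push_cast [hAdef, hBdef]
    linear_combination (c.den : ℤ) * hPN - (v.den : ℤ) * hcpn
  have e1 : max (A - B) (B - A) = ((A:ℤ) - B).natAbs := by omega
  rw [e1, hABZ]
  set D : ℤ := v.num * c.den - c.num * v.den with hDdef
  have hrnZ : (ρ.num.toNat : ℤ) = ρ.num := Int.toNat_of_nonneg (Rat.num_nonneg.2 hρ)
  have hvden : (0 : ℚ) < (v.den : ℚ) := by exact_mod_cast v.pos
  have hcden : (0 : ℚ) < (c.den : ℚ) := by exact_mod_cast c.pos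
  have hrden : (0 : ℚ) < (ρ.den : ℚ) := by exact_mod_cast ρ.pos
  have h1 : (v.num : ℚ) = v * (v.den : ℚ) := by
    have hx := Rat.num_div_den v
    rwa [div_eq_iff (ne_of_gt hvden)] at hx
  have h2 : (c.num : ℚ) = c * (c.den : ℚ) := by
    have hx := Rat.num_div_den c
    rwa [div_eq_iff (ne_of_gt hcden)] at hx
  have h3 : (ρ.num : ℚ) = ρ * (ρ.den : ℚ) := by
    have hx := Rat.num_div_den ρ
    rwa [div_eq_iff (ne_of_gt hrden)] at hx
  have key : (v - c) * ((v.den : ℚ) * c.den) = (D : ℚ) := by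
    push_cast [hDdef]
    linear_combination (-(c.den : ℚ)) * h1 + (v.den : ℚ) * h2
  have hvc : v - c = (D : ℚ) / ((v.den : ℚ) * c.den) :=
    (eq_div_iff (by positivity)).2 key
  rw [hvc, abs_div, abs_of_pos (by positivity : (0:ℚ) < (v.den : ℚ) * c.den),
    div_le_iff₀ (by positivity : (0:ℚ) < (v.den : ℚ) * c.den)]
  constructor
  · intro h
    have h' : ((D.natAbs * ρ.den : ℕ) : ℤ) ≤ ((ρ.num.toNat * (v.den * c.den) : ℕ) : ℤ) := by
      exact_mod_cast h
    push_cast [hrnZ] at h'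
    have h'' : (|D| : ℤ) * ρ.den ≤ ρ.num * ((v.den : ℤ) * c.den) := h'
    have hq : ((|D| : ℤ) : ℚ) * ρ.den ≤ (ρ.num : ℚ) * ((v.den : ℚ) * c.den) := by
      exact_mod_cast h''
    rw [h3] at hq
    rw [← Int.cast_abs]
    nlinarith [hq, hrden]
  · intro h
    have hq : ((|D| : ℤ) : ℚ) * (ρ.den : ℚ) ≤ (ρ.num : ℚ) * ((v.den : ℚ) * c.den) := by
      rw [h3, Int.cast_abs]
      nlinarith [h, hrden]
    have h'' : (|D| : ℤ) * ρ.den ≤ ρ.num * (v.den * c.den) := by exact_mod_cast hq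
    have h' : ((D.natAbs * ρ.den : ℕ) : ℤ) ≤ ((ρ.num.toNat * (v.den * c.den) : ℕ) : ℤ) := by
      push_cast [hrnZ]
      exact h''
    exact_mod_cast h'


lemma encQ_primrec : Primrec encQ := Primrec.encode

lemma coord_abs_le_norm {d : ℕ} (u : EuclideanSpace ℝ (Fin d)) (i : Fin d) : |u i| ≤ ‖u‖ := by
  rw [EuclideanSpace.norm_eq]
  have h1 : |u i| = Real.sqrt (‖u i‖ ^ 2) := by
    rw [Real.sqrt_sq_eq_abs, Real.norm_eq_abs, abs_abs]
  rw [h1]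
  apply Real.sqrt_le_sqrt
  exact Finset.single_le_sum (fun j _ => sq_nonneg ‖u j‖) (Finset.mem_univ i)

lemma norm_le_of_coord {d : ℕ} (u : EuclideanSpace ℝ (Fin d)) (a : ℝ) (ha : 0 ≤ a)
    (h : ∀ i, |u i| ≤ a) : ‖u‖ ≤ (d + 1) * a := by
  rw [EuclideanSpace.norm_eq]
  have h1 : ∑ i, ‖u i‖ ^ 2 ≤ ((d : ℝ) + 1) ^ 2 * a ^ 2 := by
    calc ∑ i, ‖u i‖ ^ 2 ≤ ∑ _i : Fin d, a ^ 2 := by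
          apply Finset.sum_le_sum
          intro j _
          rw [Real.norm_eq_abs]
          exact pow_le_pow_left₀ (abs_nonneg _) (h j) 2
      _ = d * a ^ 2 := by
          rw [Finset.sum_const, Finset.card_univ, Fintype.card_fin, nsmul_eq_mul]
      _ ≤ ((d : ℝ) + 1) ^ 2 * a ^ 2 := by
          nlinarith [sq_nonneg a, Nat.cast_nonneg (α := ℝ) d,
            mul_nonneg (mul_nonneg (Nat.cast_nonneg (α := ℝ) d) (Nat.cast_nonneg (α := ℝ) d)) (sq_nonneg a),
            mul_nonneg (Nat.cast_nonneg (α := ℝ) d) (sq_nonneg a)]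
  calc Real.sqrt (∑ i, ‖u i‖ ^ 2) ≤ Real.sqrt (((d : ℝ) + 1) ^ 2 * a ^ 2) := Real.sqrt_le_sqrt h1
    _ = ((d : ℝ) + 1) * a := by
        rw [← mul_pow, Real.sqrt_sq (by positivity)]

/-- analysis core: a selected subsequence staying in a compact set inside `V` converges to `z`. -/
lemma tendsto_of_selection {d : ℕ} (x : ℕ → EuclideanSpace ℝ (Fin d))
    (z : EuclideanSpace ℝ (Fin d)) (V : Set (EuclideanSpace ℝ (Fin d)))
    (hVinter : {w : EuclideanSpace ℝ (Fin d) | IsSeqAccPt x w} ∩ V = {z})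
    (K : Set (EuclideanSpace ℝ (Fin d))) (hK : IsCompact K) (hKV : K ⊆ V)
    (n : ℕ → ℕ) (hn : ∀ m, m ≤ n m) (hxK : ∀ m, x (n m) ∈ K) :
    Tendsto (fun m => x (n m)) atTop (nhds z) := by
  by_contra hcon
  rw [Metric.tendsto_atTop] at hcon
  push_neg at hcon
  obtain ⟨ε₀, hε₀, hfreq⟩ := hcon
  have hfreq' : ∃ᶠ m in atTop, ε₀ ≤ dist (x (n m)) z := by
    rw [frequently_atTop]
    intro N
    obtain ⟨m, hmN, hm⟩ := hfreq N
    exact ⟨m, hmN, hm⟩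
  obtain ⟨φ, hφ, hφprop⟩ := Filter.extraction_of_frequently_atTop hfreq'
  obtain ⟨w, hwK, ψ, hψ, hψtend⟩ := hK.tendsto_subseq (x := fun j => x (n (φ j))) (fun j => hxK _)
  have hwz : w ≠ z := by
    intro h
    subst h
    have hd : Tendsto (fun j => dist (x (n (φ (ψ j)))) w) atTop (nhds 0) := by
      simpa [Function.comp] using tendsto_iff_dist_tendsto_zero.1 hψtend
    have : ε₀ ≤ (0 : ℝ) := le_of_tendsto_of_tendsto' tendsto_const_nhds hd
      fun j => hφprop (ψ j)
    linarith
  have hwacc : IsSeqAccPt x w := by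
    intro δ hδ
    rw [← Nat.frequently_atTop_iff_infinite, frequently_atTop]
    intro N
    have hev : ∀ᶠ j in atTop, dist (x (n (φ (ψ j)))) w < δ := by
      have := hψtend
      rw [Metric.tendsto_atTop] at this
      obtain ⟨J, hJ⟩ := this δ hδ
      exact eventually_atTop.2 ⟨J, fun j hj => hJ j hj⟩
    obtain ⟨j, hjd, hjN⟩ := (hev.and (eventually_ge_atTop N)).exists
    refine ⟨n (φ (ψ j)), le_trans hjN ?_, ?_⟩
    · calc j ≤ ψ j := hψ.le_apply
        _ ≤ φ (ψ j) := hφ.le_apply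
        _ ≤ n (φ (ψ j)) := hn _
    · show ‖x (n (φ (ψ j))) - w‖ < δ
      rw [← dist_eq_norm]
      exact hjd
  have : w ∈ ({z} : Set (EuclideanSpace ℝ (Fin d))) := by
    rw [← hVinter]
    exact ⟨hwacc, hKV hwK⟩
  exact hwz this


lemma pow2_eq (m : ℕ) : (2:ℝ)^(-(m:ℤ)) = (1/2)^m := by
  rw [zpow_neg, zpow_natCast, one_div, inv_pow]

lemma euclid_sub_apply {d : ℕ} (a b : EuclideanSpace ℝ (Fin d)) (i : Fin d) :
    (a - b) i = a i - b i := rfl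


end Stmt7Aux

open Stmt7Aux Filter in
theorem stmt7 (d : ℕ) (x : ℕ → EuclideanSpace ℝ (Fin d)) (q : ℕ → ℕ → (Fin d → ℚ)) (hq : Computable₂ q)
    (happrox : ∀ n m : ℕ, ‖x n - ratToPt d (q n m)‖ ≤ (2 : ℝ) ^ (-(m : ℤ)))
    (z : EuclideanSpace ℝ (Fin d)) (hz : z ∈ {w : EuclideanSpace ℝ (Fin d) | IsSeqAccPt x w})
    (hiso : ∃ V : Set (EuclideanSpace ℝ (Fin d)), IsOpen V ∧ {w : EuclideanSpace ℝ (Fin d) | IsSeqAccPt x w} ∩ V = {z}) :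
    IsNaivelyComputable z := by
  classical
  obtain ⟨V, hVopen, hVinter⟩ := hiso
  have hzV : z ∈ V := by
    have h1 : z ∈ ({z} : Set (EuclideanSpace ℝ (Fin d))) := rfl
    rw [← hVinter] at h1
    exact h1.2
  obtain ⟨ε, hε, hball⟩ := Metric.isOpen_iff.1 hVopen z hzV
  obtain ⟨ρ, hρl, hρu⟩ := exists_rat_btwn (show (0:ℝ) < ε / (5*((d:ℝ)+1)) by positivity)
  have hρ0 : (0:ℝ) < (ρ:ℝ) := hρl
  have hρQ : (0:ℚ) < ρ := by exact_mod_cast hρl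
  have hρε : ((d:ℝ)+1) * (5*(ρ:ℝ)) < ε := by
    have h5 : (0:ℝ) < 5*((d:ℝ)+1) := by positivity
    have := (lt_div_iff₀ h5).1 hρu
    nlinarith
  obtain ⟨k₀, hk₀⟩ : ∃ k : ℕ, ((1:ℝ)/2)^k < ρ := exists_pow_lt_of_lt_one hρ0 (by norm_num)
  have hc' : ∀ i : Fin d, ∃ ci : ℚ, |z i - (ci:ℝ)| < ρ := fun i => exists_rat_near (z i) hρ0
  choose c hc using hc'
  set ρ' : ℚ := 3 * ρ with hρ'def
  have hρ'0 : (0:ℚ) ≤ ρ' := by positivity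
  -- decaying bound at stage m
  have hM : ∀ m : ℕ, (2:ℝ)^(-((max m k₀ : ℕ):ℤ)) ≤ ρ := by
    intro m
    rw [pow2_eq]
    calc ((1:ℝ)/2)^(max m k₀) ≤ ((1:ℝ)/2)^k₀ :=
          pow_le_pow_of_le_one (by norm_num) (by norm_num) (le_max_right m k₀)
      _ ≤ ρ := le_of_lt hk₀
  have qcoord : ∀ n m (i : Fin d), |x n i - (q n m i : ℝ)| ≤ (2:ℝ)^(-(m:ℤ)) := by
    intro n m i
    have h1 := coord_abs_le_norm (x n - ratToPt d (q n m)) i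
    rw [euclid_sub_apply] at h1
    have h2 : (ratToPt d (q n m)) i = (q n m i : ℝ) := rfl
    rw [h2] at h1
    exact le_trans h1 (happrox n m)
  -- the test
  set T : ℕ × ℕ → Bool := fun p => allb (List.ofFn fun i : Fin d =>
    ctest (c i).num.toNat (-(c i).num).toNat (c i).den ρ'.num.toNat ρ'.den
      (encQ (q p.2 (max p.1 k₀) i))) with hTdef
  have hT_iff : ∀ m n : ℕ, T (m, n) = true ↔ ∀ i, |q n (max m k₀) i - c i| ≤ ρ' := by
    intro m n
    rw [hTdef, allb_iff]
    constructor
    · intro h i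
      exact (ctest_iff (c i) ρ' hρ'0 _).1 (h _ (List.mem_ofFn.2 ⟨i, rfl⟩))
    · intro h b hb
      obtain ⟨i, rfl⟩ := List.mem_ofFn.1 hb
      exact (ctest_iff (c i) ρ' hρ'0 _).2 (h i)
  -- completeness of the test
  have hT_total : ∀ m : ℕ, ∃ j : ℕ, T (m, m + j) = true := by
    intro m
    obtain ⟨n0, hn0mem, hn0gt⟩ := (hz (ρ:ℝ) hρ0).exists_gt m
    refine ⟨n0 - m, ?_⟩
    rw [show m + (n0 - m) = n0 by omega, hT_iff]
    intro i
    rw [← Rat.cast_le (K := ℝ), Rat.cast_abs, Rat.cast_sub]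
    have hb1 : |(q n0 (max m k₀) i : ℝ) - x n0 i| ≤ ρ := by
      rw [abs_sub_comm]
      exact le_trans (qcoord n0 (max m k₀) i) (hM m)
    have hb2 : |x n0 i - z i| ≤ ρ := by
      have h1 := coord_abs_le_norm (x n0 - z) i
      rw [euclid_sub_apply] at h1
      exact le_trans h1 (le_of_lt hn0mem)
    have hb3 : |z i - (c i : ℝ)| ≤ ρ := le_of_lt (hc i)
    have htri : |(q n0 (max m k₀) i : ℝ) - (c i : ℝ)| ≤
        |(q n0 (max m k₀) i : ℝ) - x n0 i| + |x n0 i - z i| + |z i - (c i : ℝ)| := by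
      calc |(q n0 (max m k₀) i : ℝ) - (c i : ℝ)|
          ≤ |(q n0 (max m k₀) i : ℝ) - x n0 i| + |x n0 i - (c i : ℝ)| := abs_sub_le _ _ _
        _ ≤ |(q n0 (max m k₀) i : ℝ) - x n0 i| + (|x n0 i - z i| + |z i - (c i : ℝ)|) :=
            add_le_add_right (abs_sub_le _ _ _) _
        _ = _ := by ring
    have : (ρ' : ℝ) = 3 * ρ := by rw [hρ'def]; push_cast; ring
    rw [this]
    linarith
  -- soundness of the test
  set R : ℝ := ((d:ℝ)+1) * (5*(ρ:ℝ)) with hRdef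
  have hsound : ∀ m n : ℕ, T (m, n) = true → x n ∈ Metric.closedBall z R := by
    intro m n hTmn
    rw [hT_iff] at hTmn
    rw [Metric.mem_closedBall, dist_eq_norm]
    apply norm_le_of_coord _ (5*(ρ:ℝ)) (by positivity)
    intro i
    rw [euclid_sub_apply]
    have hb1 : |x n i - (q n (max m k₀) i : ℝ)| ≤ ρ := le_trans (qcoord n _ i) (hM m)
    have hb2 : |(q n (max m k₀) i : ℝ) - (c i : ℝ)| ≤ 3*(ρ:ℝ) := by
      have := hTmn i
      rw [← Rat.cast_le (K := ℝ), Rat.cast_abs, Rat.cast_sub] at this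
      calc |(q n (max m k₀) i : ℝ) - (c i : ℝ)| ≤ (ρ' : ℝ) := this
        _ = 3*(ρ:ℝ) := by rw [hρ'def]; push_cast; ring
    have hb3 : |(c i : ℝ) - z i| ≤ ρ := by rw [abs_sub_comm]; exact le_of_lt (hc i)
    calc |x n i - z i| ≤ |x n i - (q n (max m k₀) i : ℝ)| + |(q n (max m k₀) i : ℝ) - z i| :=
          abs_sub_le _ _ _
      _ ≤ |x n i - (q n (max m k₀) i : ℝ)| +
          (|(q n (max m k₀) i : ℝ) - (c i : ℝ)| + |(c i : ℝ) - z i|) :=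
          add_le_add_right (abs_sub_le _ _ _) _
      _ ≤ ρ + (3*(ρ:ℝ) + ρ) := by linarith
      _ = 5*(ρ:ℝ) := by ring
  have hKV : Metric.closedBall z R ⊆ V := by
    intro w hw
    apply hball
    rw [Metric.mem_ball]
    exact lt_of_le_of_lt (Metric.mem_closedBall.1 hw) hρε
  -- computability of the test
  have hTcomp : Computable T := by
    rw [hTdef]
    apply Computable.comp allb_primrec.to_comp
    apply Computable.list_ofFn
    intro i
    have hqi : Computable fun p : ℕ × ℕ => q p.2 (max p.1 k₀) i := by
      have h1 : Computable fun p : ℕ × ℕ => q p.2 (max p.1 k₀) :=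
        hq.comp Computable.snd
          (Primrec.nat_max.to_comp.comp Computable.fst (Computable.const k₀))
      have happ : Computable fun v : Fin d → ℚ => v i :=
        (Primrec.fin_app.comp Primrec.id (Primrec.const i)).to_comp
      exact happ.comp h1
    exact (ctest_computable _ _ _ _ _).comp (encQ_primrec.to_comp.comp hqi)
  -- selection function
  set nsel : ℕ → ℕ := fun m => m + Nat.find (hT_total m) with hnseldef
  have hTsel : ∀ m, T (m, nsel m) = true := fun m => Nat.find_spec (hT_total m)
  have hnsel_ge : ∀ m, m ≤ nsel m := fun m => Nat.le_add_right _ _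
  have hxtend : Tendsto (fun m => x (nsel m)) atTop (nhds z) :=
    tendsto_of_selection x z V hVinter _ (isCompact_closedBall z R) hKV nsel hnsel_ge
      (fun m => hsound _ _ (hTsel m))
  have hnsel_comp : Computable nsel := by
    have hp : Computable₂ fun (m j : ℕ) => T (m, m + j) :=
      hTcomp.comp (Computable.pair Computable.fst
        (Primrec.nat_add.to_comp.comp Computable.fst Computable.snd))
    exact Primrec.nat_add.to_comp.comp Computable.id (computable_nat_find hp hT_total)
  refine ⟨fun m => q (nsel m) (max m k₀), ?_, ?_⟩
  · exact hq.comp hnsel_comp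
      (Primrec.nat_max.to_comp.comp Computable.id (Computable.const k₀))
  · -- convergence
    rw [tendsto_iff_dist_tendsto_zero]
    apply squeeze_zero (fun m => dist_nonneg)
      (g := fun m => (1/2:ℝ)^m + dist (x (nsel m)) z)
    · intro m
      calc dist (ratToPt d (q (nsel m) (max m k₀))) z
          ≤ dist (ratToPt d (q (nsel m) (max m k₀))) (x (nsel m)) + dist (x (nsel m)) z :=
            dist_triangle _ _ _
        _ ≤ (1/2:ℝ)^m + dist (x (nsel m)) z := by
            apply add_le_add_left
            rw [dist_comm, dist_eq_norm]
            refine le_trans (happrox (nsel m) (max m k₀)) ?_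
            rw [pow2_eq]
            exact pow_le_pow_of_le_one (by norm_num) (by norm_num) (le_max_left m k₀)
    · have h1 : Tendsto (fun m : ℕ => (1/2:ℝ)^m) atTop (nhds 0) :=
        tendsto_pow_atTop_nhds_zero_of_lt_one (by norm_num) (by norm_num)
      have h2 : Tendsto (fun m => dist (x (nsel m)) z) atTop (nhds 0) :=
        tendsto_iff_dist_tendsto_zero.1 hxtend
      simpa using h1.add h2
end

section
/- Let A ⊆ ℝ^d be a nonempty r.e. closed set and U ⊆ ℝ^d an r.e. open set such that the intersection A ∩ U is closed and nonempty. Then A ∩ U is an r.e. closed set. -/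
namespace Stmt14Aux
open Encodable

/-! ### Part I: computable access to num/den of rationals -/

def Eor : ℚ → ℕ := @encode ℚ Rat.instEncodable

lemma Eor_eq (q : ℚ) : Eor q = Nat.pair (encode q.num) q.den := rfl

lemma encode_int_ofNat (n : ℕ) : (encode (Int.ofNat n) : ℕ) = 2 * n := rfl
lemma encode_int_negSucc (n : ℕ) : (encode (Int.negSucc n) : ℕ) = 2 * n + 1 := rfl

def nabs (e : ℕ) : ℕ := if e.bodd then e / 2 + 1 else e / 2

lemma bodd_two_mul (n : ℕ) : (2 * n).bodd = false := by
  simp [Nat.bodd_mul]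

lemma bodd_two_mul_add_one (n : ℕ) : (2 * n + 1).bodd = true := by
  simp [Nat.bodd_add, Nat.bodd_mul]

lemma two_mul_div_two (n : ℕ) : 2 * n / 2 = n := by omega
lemma two_mul_add_one_div_two (n : ℕ) : (2 * n + 1) / 2 = n := by omega

lemma nabs_encode (z : ℤ) : nabs (encode z) = z.natAbs := by
  cases z with
  | ofNat n =>
      show nabs (encode (Int.ofNat n)) = n
      rw [encode_int_ofNat]
      simp [nabs, bodd_two_mul, two_mul_div_two]
  | negSucc n =>
      show nabs (encode (Int.negSucc n)) = n + 1
      rw [encode_int_negSucc]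
      simp [nabs, bodd_two_mul_add_one, two_mul_add_one_div_two]

lemma int_encode_surj (e : ℕ) : ∃ z : ℤ, (encode z : ℕ) = e := by
  rcases Nat.even_or_odd e with ⟨m, hm⟩ | ⟨m, hm⟩
  · exact ⟨Int.ofNat m, by rw [encode_int_ofNat]; omega⟩
  · exact ⟨Int.negSucc m, by rw [encode_int_negSucc]; omega⟩

/-- boolean divisibility -/
def dvdb (p a : ℕ) : Bool := a % p == 0

lemma dvdb_iff (p a : ℕ) : dvdb p a = true ↔ p ∣ a := by
  simp only [dvdb, beq_iff_eq]
  exact ⟨Nat.dvd_of_mod_eq_zero, Nat.mod_eq_zero_of_dvd⟩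

def anyCommonDiv (ab : ℕ × ℕ) : Bool :=
  (List.range (ab.1 + ab.2 + 1)).foldr
    (fun p acc => acc || (decide (2 ≤ p) && dvdb p ab.1 && dvdb p ab.2)) false

lemma foldr_or_eq (g : ℕ → Bool) (l : List ℕ) :
    l.foldr (fun p acc => acc || g p) false = true ↔ ∃ p ∈ l, g p = true := by
  induction l with
  | nil => simp
  | cons a l ih =>
      rw [List.foldr_cons, Bool.or_eq_true, ih]
      simp only [List.mem_cons]
      constructor
      · rintro (⟨p, hp, hg⟩ | hg)
        · exact ⟨p, Or.inr hp, hg⟩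
        · exact ⟨a, Or.inl rfl, hg⟩
      · rintro ⟨p, (rfl | hp), hg⟩
        · exact Or.inr hg
        · exact Or.inl ⟨p, hp, hg⟩

lemma anyCommonDiv_iff (a b : ℕ) (hpos : 0 < a + b) :
    anyCommonDiv (a, b) = true ↔ ∃ p, 2 ≤ p ∧ p ∣ a ∧ p ∣ b := by
  unfold anyCommonDiv
  rw [foldr_or_eq]
  constructor
  · rintro ⟨p, _, hp⟩
    simp only [Bool.and_eq_true, decide_eq_true_eq, dvdb_iff] at hp
    exact ⟨p, hp.1.1, hp.1.2, hp.2⟩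
  · rintro ⟨p, h2, ha, hb⟩
    refine ⟨p, ?_, ?_⟩
    · rw [List.mem_range]
      rcases Nat.eq_zero_or_pos a with rfl | hA
      · rcases Nat.eq_zero_or_pos b with rfl | hB
        · omega
        · have := Nat.le_of_dvd hB hb; omega
      · have := Nat.le_of_dvd hA ha; omega
    · simp [decide_eq_true_eq, dvdb_iff, h2, ha, hb]

def coprimeb (a b : ℕ) : Bool := decide (0 < a + b) && !anyCommonDiv (a, b)

lemma coprimeb_iff (a b : ℕ) : coprimeb a b = true ↔ Nat.Coprime a b := by
  unfold coprimeb
  simp only [Bool.and_eq_true, decide_eq_true_eq, Bool.not_eq_true']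
  constructor
  · rintro ⟨hpos, hno⟩
    have hno' : ¬ ∃ p, 2 ≤ p ∧ p ∣ a ∧ p ∣ b := by
      rw [← anyCommonDiv_iff a b hpos]; simp [hno]
    have hg0 : Nat.gcd a b ≠ 0 := by
      intro h
      rw [Nat.gcd_eq_zero_iff] at h
      omega
    have hg2 : ¬ (2 ≤ Nat.gcd a b) := fun h =>
      hno' ⟨Nat.gcd a b, h, Nat.gcd_dvd_left a b, Nat.gcd_dvd_right a b⟩
    have : Nat.gcd a b = 1 := by omega
    exact this
  · intro hcop
    have hpos : 0 < a + b := by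
      rcases Nat.eq_zero_or_pos (a + b) with h | h
      · exfalso
        have ha : a = 0 := by omega
        have hb : b = 0 := by omega
        rw [ha, hb] at hcop
        simp [Nat.Coprime] at hcop
      · exact h
    refine ⟨hpos, ?_⟩
    by_contra h
    rw [Bool.not_eq_false, anyCommonDiv_iff a b hpos] at h
    rcases h with ⟨p, h2, ha, hb⟩
    have : p ∣ Nat.gcd a b := Nat.dvd_gcd ha hb
    rw [hcop] at this
    have := Nat.le_of_dvd one_pos this
    omega

def chib (k : ℕ) : Bool := decide (0 < k.unpair.2) && coprimeb (nabs k.unpair.1) k.unpair.2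

lemma chib_iff (k : ℕ) : chib k = true ↔ k ∈ Set.range Eor := by
  unfold chib
  simp only [Bool.and_eq_true, decide_eq_true_eq, coprimeb_iff]
  constructor
  · rintro ⟨hpos, hcop⟩
    obtain ⟨z, hz⟩ := int_encode_surj k.unpair.1
    have hcop' : z.natAbs.Coprime k.unpair.2 := by rwa [← hz, nabs_encode] at hcop
    refine ⟨⟨z, k.unpair.2, by omega, hcop'⟩, ?_⟩
    rw [Eor_eq]
    show Nat.pair (encode z) k.unpair.2 = k
    rw [hz, Nat.pair_unpair]
  · rintro ⟨q, rfl⟩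
    rw [Eor_eq, Nat.unpair_pair]
    exact ⟨q.pos, by rw [nabs_encode]; exact q.reduced⟩

def cntb (k : ℕ) : ℕ :=
  (List.range k).foldr (fun p acc => bif chib p then acc + 1 else acc) 0

lemma foldr_count_eq (g : ℕ → Bool) (l : List ℕ) :
    l.foldr (fun p acc => bif g p then acc + 1 else acc) 0 = l.countP g := by
  induction l with
  | nil => simp
  | cons a l ih =>
      rw [List.foldr_cons, ih, List.countP_cons]
      cases h : g a <;> simp [h]

def encD : ℚ → ℕ := @encode ℚ (Primcodable.ofDenumerable ℚ).toEncodable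

lemma encD_eq_countP (q : ℚ) :
    encD q = (List.range (Eor q)).countP
      (fun k => @decide (k ∈ Set.range Eor)
        (@Encodable.decidableRangeEncode ℚ Rat.instEncodable k)) := rfl

lemma encD_eq (q : ℚ) : encD q = cntb (Eor q) := by
  rw [encD_eq_countP, cntb, foldr_count_eq]
  apply List.countP_congr
  intro k _
  cases h : chib k
  · have hnm : ¬ (k ∈ Set.range Eor) := fun hm => by simp [(chib_iff k).mpr hm] at h
    exact ⟨fun hm => absurd (of_decide_eq_true (inst := _) hm) hnm, fun hf => absurd hf Bool.false_ne_true⟩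
  · have hm : k ∈ Set.range Eor := (chib_iff k).mp h
    exact ⟨fun _ => rfl, fun _ => decide_eq_true (inst := _) hm⟩


/-! ### computability -/

lemma primrec_nabs : Primrec nabs := by
  have h : Primrec fun e : ℕ => cond e.bodd (e / 2 + 1) (e / 2) :=
    Primrec.cond Primrec.nat_bodd
      (Primrec.succ.comp (Primrec.nat_div.comp .id (.const 2)))
      (Primrec.nat_div.comp .id (.const 2))
  exact h.of_eq fun e => by cases h : e.bodd <;> simp [nabs, h]

lemma primrec_dvdb : Primrec₂ dvdb :=
  Primrec.beq.comp (Primrec.nat_mod.comp .snd .fst) (.const 0)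

lemma primrec_anyCommonDiv : Primrec anyCommonDiv := by
  have hf : Primrec fun ab : ℕ × ℕ => List.range (ab.1 + ab.2 + 1) :=
    Primrec.list_range.comp (Primrec.succ.comp (Primrec.nat_add.comp .fst .snd))
  have hp : Primrec fun x : (ℕ × ℕ) × ℕ × Bool => x.2.1 := Primrec.fst.comp .snd
  have hacc : Primrec fun x : (ℕ × ℕ) × ℕ × Bool => x.2.2 := Primrec.snd.comp .snd
  have ha : Primrec fun x : (ℕ × ℕ) × ℕ × Bool => x.1.1 := Primrec.fst.comp .fst
  have hb : Primrec fun x : (ℕ × ℕ) × ℕ × Bool => x.1.2 := Primrec.snd.comp .fst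
  have h2 : Primrec fun x : (ℕ × ℕ) × ℕ × Bool => decide (2 ≤ x.2.1) :=
    (Primrec.nat_le.comp (.const 2) hp).decide
  have hh : Primrec₂ fun (ab : ℕ × ℕ) (pa : ℕ × Bool) =>
      pa.2 || (decide (2 ≤ pa.1) && dvdb pa.1 ab.1 && dvdb pa.1 ab.2) :=
    Primrec.or.comp hacc
      (Primrec.and.comp (Primrec.and.comp h2 (primrec_dvdb.comp hp ha))
        (primrec_dvdb.comp hp hb))
  exact (Primrec.list_foldr hf (.const false) hh).of_eq fun ab => rfl

lemma primrec_coprimeb : Primrec₂ coprimeb := by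
  have h1 : Primrec fun ab : ℕ × ℕ => decide (0 < ab.1 + ab.2) :=
    (Primrec.nat_lt.comp (.const 0) (Primrec.nat_add.comp .fst .snd)).decide
  exact Primrec.and.comp h1 (Primrec.not.comp primrec_anyCommonDiv)

lemma primrec_chib : Primrec chib := by
  have h1 : Primrec fun k : ℕ => decide (0 < k.unpair.2) :=
    (Primrec.nat_lt.comp (.const 0) (Primrec.snd.comp .unpair)).decide
  exact Primrec.and.comp h1
    (primrec_coprimeb.comp (primrec_nabs.comp (Primrec.fst.comp .unpair))
      (Primrec.snd.comp .unpair))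

lemma primrec_cntb : Primrec cntb := by
  have hh : Primrec₂ fun (_ : ℕ) (pa : ℕ × ℕ) => bif chib pa.1 then pa.2 + 1 else pa.2 :=
    Primrec.cond (primrec_chib.comp (Primrec.fst.comp .snd))
      (Primrec.succ.comp (Primrec.snd.comp .snd)) (Primrec.snd.comp .snd)
  exact (Primrec.list_foldr .list_range (.const 0) hh).of_eq fun k => rfl

noncomputable def gfun : ℕ → ℕ := fun a => Eor (Denumerable.ofNat ℚ a)

lemma encD_ofNat (a : ℕ) : encD (Denumerable.ofNat ℚ a) = a :=
  Denumerable.encode_ofNat a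

lemma encD_inj : Function.Injective encD :=
  @Encodable.encode_injective ℚ (Primcodable.ofDenumerable ℚ).toEncodable

lemma computable_gfun : Computable gfun := by
  have hb : Computable₂ fun (a k : ℕ) => chib k && (cntb k == a) :=
    (Primrec.and.comp (primrec_chib.comp .snd)
      (Primrec.beq.comp (primrec_cntb.comp .snd) .fst)).to_comp.to₂
  have hpart : Partrec fun a => Nat.rfind fun k => (fun k => chib k && (cntb k == a)) k :=
    Partrec.rfind hb.partrec₂
  apply hpart.of_eq_tot
  intro a
  refine Nat.mem_rfind.mpr ⟨?_, ?_⟩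
  · show true ∈ (Part.some (chib (gfun a) && (cntb (gfun a) == a)))
    rw [Part.mem_some_iff, eq_comm, Bool.and_eq_true, beq_iff_eq]
    refine ⟨(chib_iff _).mpr ⟨_, rfl⟩, ?_⟩
    show cntb (Eor (Denumerable.ofNat ℚ a)) = a
    rw [← encD_eq, encD_ofNat]
  · intro m hm
    show false ∈ (Part.some (chib m && (cntb m == a)))
    rw [Part.mem_some_iff, eq_comm]
    by_contra hne
    rw [Bool.not_eq_false, Bool.and_eq_true, beq_iff_eq] at hne
    obtain ⟨q', hq'⟩ := (chib_iff m).mp hne.1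
    have h1 : encD q' = a := by rw [encD_eq, hq']; exact hne.2
    have h2 : encD (Denumerable.ofNat ℚ a) = a := encD_ofNat a
    have : q' = Denumerable.ofNat ℚ a := encD_inj (h1.trans h2.symm)
    rw [this] at hq'
    exact absurd hq' (by have : gfun a = Eor (Denumerable.ofNat ℚ a) := rfl; omega)

lemma computable_encD : Computable encD := Computable.encode

lemma computable_Eor : Computable Eor := by
  have := computable_gfun.comp computable_encD
  exact this.of_eq fun q => by
    show Eor (Denumerable.ofNat ℚ (encD q)) = Eor q
    congr 1
    exact Denumerable.ofNat_encode q

def tripleOf (ρ : ℚ) : ℕ × ℕ × ℕ := (ρ.num.toNat, (-ρ.num).toNat, ρ.den)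

lemma computable_tripleOf : Computable tripleOf := by
  have hP : Primrec fun k : ℕ =>
      ((cond k.unpair.1.bodd 0 (k.unpair.1 / 2) : ℕ),
        ((cond k.unpair.1.bodd (k.unpair.1 / 2 + 1) 0 : ℕ), k.unpair.2)) := by
    have h1 : Primrec fun k : ℕ => k.unpair.1 := Primrec.fst.comp .unpair
    have hb : Primrec fun k : ℕ => k.unpair.1.bodd := Primrec.nat_bodd.comp h1
    have hd : Primrec fun k : ℕ => k.unpair.1 / 2 := Primrec.nat_div.comp h1 (.const 2)
    exact .pair (Primrec.cond hb (.const 0) hd)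
      (.pair (Primrec.cond hb (Primrec.succ.comp hd) (.const 0))
        (Primrec.snd.comp .unpair))
  have := hP.to_comp.comp computable_Eor
  apply this.of_eq
  intro q
  rw [Eor_eq, Nat.unpair_pair]
  show _ = tripleOf q
  unfold tripleOf
  cases hz : q.num with
  | ofNat n =>
      rw [encode_int_ofNat, bodd_two_mul, two_mul_div_two]
      simp
  | negSucc n =>
      rw [encode_int_negSucc, bodd_two_mul_add_one, two_mul_add_one_div_two]
      simp [Int.neg_negSucc]


/-! ### Part II: exact rational tests via ℕ-triples -/

def tval (t : ℕ × ℕ × ℕ) : ℚ := ((t.1 : ℚ) - (t.2.1 : ℚ)) / (t.2.2 : ℚ)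

def tadd (a b : ℕ × ℕ × ℕ) : ℕ × ℕ × ℕ :=
  (a.1 * b.2.2 + b.1 * a.2.2, a.2.1 * b.2.2 + b.2.1 * a.2.2, a.2.2 * b.2.2)

def tneg (a : ℕ × ℕ × ℕ) : ℕ × ℕ × ℕ := (a.2.1, a.1, a.2.2)

def tmul (a b : ℕ × ℕ × ℕ) : ℕ × ℕ × ℕ :=
  (a.1 * b.1 + a.2.1 * b.2.1, a.1 * b.2.1 + a.2.1 * b.1, a.2.2 * b.2.2)

def tlt (a b : ℕ × ℕ × ℕ) : Bool :=
  decide (a.1 * b.2.2 + b.2.1 * a.2.2 < b.1 * a.2.2 + a.2.1 * b.2.2)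

lemma den_cast_ne {n : ℕ} (h : 0 < n) : (n : ℚ) ≠ 0 := by positivity

lemma tval_add (a b : ℕ × ℕ × ℕ) (ha : 0 < a.2.2) (hb : 0 < b.2.2) :
    tval (tadd a b) = tval a + tval b := by
  unfold tval tadd
  have h1 := den_cast_ne ha
  have h2 := den_cast_ne hb
  field_simp
  push_cast
  ring

lemma tval_mul (a b : ℕ × ℕ × ℕ) (ha : 0 < a.2.2) (hb : 0 < b.2.2) :
    tval (tmul a b) = tval a * tval b := by
  unfold tval tmul
  have h1 := den_cast_ne ha
  have h2 := den_cast_ne hb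
  field_simp
  push_cast
  ring

lemma tval_neg (a : ℕ × ℕ × ℕ) : tval (tneg a) = - tval a := by
  unfold tval tneg
  ring

lemma tlt_iff (a b : ℕ × ℕ × ℕ) (ha : 0 < a.2.2) (hb : 0 < b.2.2) :
    tlt a b = true ↔ tval a < tval b := by
  unfold tlt tval
  rw [decide_eq_true_eq, div_lt_div_iff₀ (by exact_mod_cast ha) (by exact_mod_cast hb)]
  have key : ((a.1 : ℚ) * b.2.2 + b.2.1 * a.2.2 < b.1 * a.2.2 + a.2.1 * b.2.2)
      ↔ (a.1 * b.2.2 + b.2.1 * a.2.2 < b.1 * a.2.2 + a.2.1 * b.2.2) := by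
    exact_mod_cast Iff.rfl
  rw [← key]
  constructor <;> intro h <;> nlinarith [h]

lemma tval_tripleOf (ρ : ℚ) : tval (tripleOf ρ) = ρ := by
  unfold tval tripleOf
  have hz : ((ρ.num.toNat : ℤ) - ((-ρ.num).toNat : ℤ)) = ρ.num := by omega
  have : ((ρ.num.toNat : ℚ) - ((-ρ.num).toNat : ℚ)) = (ρ.num : ℚ) := by
    exact_mod_cast congrArg (fun z : ℤ => (z : ℚ)) hz
  rw [this, Rat.num_div_den]

lemma tripleOf_den_pos (ρ : ℚ) : 0 < (tripleOf ρ).2.2 := ρ.pos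

def sumT (l : List (ℕ × ℕ × ℕ)) : ℕ × ℕ × ℕ := l.foldr tadd (0, 0, 1)

lemma sumT_den_pos (l : List (ℕ × ℕ × ℕ)) (h : ∀ t ∈ l, 0 < t.2.2) :
    0 < (sumT l).2.2 := by
  induction l with
  | nil => simp [sumT]
  | cons a l ih =>
      have : 0 < (sumT l).2.2 := ih fun t ht => h t (List.mem_cons_of_mem a ht)
      have ha : 0 < a.2.2 := h a List.mem_cons_self
      show 0 < a.2.2 * (sumT l).2.2
      exact Nat.mul_pos ha this

lemma sumT_val (l : List (ℕ × ℕ × ℕ)) (h : ∀ t ∈ l, 0 < t.2.2) :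
    tval (sumT l) = (l.map tval).sum := by
  induction l with
  | nil => simp [sumT, tval]
  | cons a l ih =>
      have hl : ∀ t ∈ l, 0 < t.2.2 := fun t ht => h t (List.mem_cons_of_mem a ht)
      have ha : 0 < a.2.2 := h a List.mem_cons_self
      show tval (tadd a (sumT l)) = _
      rw [tval_add a (sumT l) ha (sumT_den_pos l hl), ih hl, List.map_cons, List.sum_cons]

def testT (d : ℕ) (v w : Fin d → ℚ) (ρ : ℚ) (m : ℕ) : Bool :=
  let h := tadd (tripleOf ρ) (0, 1, 2 ^ m)
  tlt (0, 0, 1) h &&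
    tlt (sumT (List.ofFn fun i =>
        (fun s => tmul s s) (tadd (tripleOf (v i)) (tneg (tripleOf (w i)))))) (tmul h h)

lemma testT_iff (d : ℕ) (v w : Fin d → ℚ) (ρ : ℚ) (m : ℕ) :
    testT d v w ρ m = true ↔
      (0 < ρ - ((2 : ℚ) ^ m)⁻¹ ∧
        (∑ i, (v i - w i) ^ 2) < (ρ - ((2 : ℚ) ^ m)⁻¹) ^ 2) := by
  set h := tadd (tripleOf ρ) (0, 1, 2 ^ m) with hh
  have hpow : 0 < (2 ^ m : ℕ) := Nat.pow_pos (by norm_num)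
  have hden : 0 < h.2.2 := by
    show 0 < (tripleOf ρ).2.2 * (2 ^ m)
    exact Nat.mul_pos (tripleOf_den_pos ρ) hpow
  have hvalh : tval h = ρ - ((2 : ℚ) ^ m)⁻¹ := by
    rw [hh, tval_add _ _ (tripleOf_den_pos ρ) hpow, tval_tripleOf]
    unfold tval
    push_cast
    ring
  have hterm : ∀ i : Fin d, 0 <
      ((fun s => tmul s s) (tadd (tripleOf (v i)) (tneg (tripleOf (w i))))).2.2 := by
    intro i
    show 0 < ((tripleOf (v i)).2.2 * (tripleOf (w i)).2.2) *
        ((tripleOf (v i)).2.2 * (tripleOf (w i)).2.2)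
    have := Nat.mul_pos (tripleOf_den_pos (v i)) (tripleOf_den_pos (w i))
    exact Nat.mul_pos this this
  set L := List.ofFn fun i =>
      (fun s => tmul s s) (tadd (tripleOf (v i)) (tneg (tripleOf (w i)))) with hL
  have hLpos : ∀ t ∈ L, 0 < t.2.2 := by
    intro t ht
    rw [hL, List.mem_ofFn] at ht
    obtain ⟨i, rfl⟩ := ht
    exact hterm i
  have hvalL : tval (sumT L) = ∑ i, (v i - w i) ^ 2 := by
    rw [sumT_val L hLpos, hL, List.map_ofFn, List.sum_ofFn]
    congr 1
    funext i
    show tval (tmul _ _) = _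
    have hdi : 0 < (tadd (tripleOf (v i)) (tneg (tripleOf (w i)))).2.2 := by
      show 0 < (tripleOf (v i)).2.2 * (tripleOf (w i)).2.2
      exact Nat.mul_pos (tripleOf_den_pos (v i)) (tripleOf_den_pos (w i))
    rw [tval_mul _ _ hdi hdi,
      tval_add _ _ (tripleOf_den_pos (v i))
        (show 0 < (tneg (tripleOf (w i))).2.2 from tripleOf_den_pos (w i)),
      tval_neg, tval_tripleOf, tval_tripleOf]
    ring
  unfold testT
  rw [Bool.and_eq_true]
  rw [tlt_iff _ _ (by norm_num) hden,
    tlt_iff _ _ (sumT_den_pos L hLpos) (by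
      show 0 < h.2.2 * h.2.2
      exact Nat.mul_pos hden hden)]
  rw [tval_mul _ _ hden hden, hvalh, hvalL]
  have h0 : tval (0, 0, 1) = 0 := by unfold tval; norm_num
  rw [h0, ← sq]

/-! Primrec-ness of triple operations -/

section PrimrecT

open Primrec

private lemma pa1 : Primrec fun x : (ℕ × ℕ × ℕ) × ℕ × ℕ × ℕ => x.1.1 := fst.comp fst
private lemma pa21 : Primrec fun x : (ℕ × ℕ × ℕ) × ℕ × ℕ × ℕ => x.1.2.1 :=
  fst.comp (snd.comp fst)
private lemma pa22 : Primrec fun x : (ℕ × ℕ × ℕ) × ℕ × ℕ × ℕ => x.1.2.2 :=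
  snd.comp (snd.comp fst)
private lemma pb1 : Primrec fun x : (ℕ × ℕ × ℕ) × ℕ × ℕ × ℕ => x.2.1 := fst.comp snd
private lemma pb21 : Primrec fun x : (ℕ × ℕ × ℕ) × ℕ × ℕ × ℕ => x.2.2.1 :=
  fst.comp (snd.comp snd)
private lemma pb22 : Primrec fun x : (ℕ × ℕ × ℕ) × ℕ × ℕ × ℕ => x.2.2.2 :=
  snd.comp (snd.comp snd)

lemma primrec_tadd : Primrec₂ tadd :=
  Primrec.pair (nat_add.comp (nat_mul.comp pa1 pb22) (nat_mul.comp pb1 pa22))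
    (Primrec.pair (nat_add.comp (nat_mul.comp pa21 pb22) (nat_mul.comp pb21 pa22))
      (nat_mul.comp pa22 pb22))

lemma primrec_tmul : Primrec₂ tmul :=
  Primrec.pair (nat_add.comp (nat_mul.comp pa1 pb1) (nat_mul.comp pa21 pb21))
    (Primrec.pair (nat_add.comp (nat_mul.comp pa1 pb21) (nat_mul.comp pa21 pb1))
      (nat_mul.comp pa22 pb22))

lemma primrec_tneg : Primrec tneg :=
  Primrec.pair (fst.comp snd) (Primrec.pair fst (snd.comp snd))

lemma primrec_tlt : Primrec₂ tlt :=
  (nat_lt.comp (nat_add.comp (nat_mul.comp pa1 pb22) (nat_mul.comp pb21 pa22))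
    (nat_add.comp (nat_mul.comp pb1 pa22) (nat_mul.comp pa21 pb22))).decide

lemma primrec_sumT : Primrec sumT := by
  have hh : Primrec₂ fun (_ : List (ℕ × ℕ × ℕ)) (p : (ℕ × ℕ × ℕ) × ℕ × ℕ × ℕ) =>
      tadd p.1 p.2 :=
    primrec_tadd.comp (fst.comp snd) (snd.comp snd)
  exact (list_foldr .id (.const (0, 0, 1)) hh).of_eq fun l => rfl

lemma primrec_pow2 : Primrec fun m : ℕ => 2 ^ m := by
  have : Primrec₂ ((· ^ ·) : ℕ → ℕ → ℕ) := Primrec₂.unpaired'.1 Nat.Primrec.pow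
  exact this.comp (.const 2) .id

end PrimrecT

lemma computable_list_ofFn {α σ : Type} [Primcodable α] [Primcodable σ] :
    ∀ {n : ℕ} {f : Fin n → α → σ}, (∀ i, Computable (f i)) →
      Computable fun a => List.ofFn fun i => f i a
  | 0, _, _ => by simp only [List.ofFn_zero]; exact .const []
  | n + 1, f, hf => by
      simpa [List.ofFn_succ] using Computable.list_cons.comp (hf 0)
        (computable_list_ofFn fun i => hf i.succ)

def testP (d : ℕ) (x : ((Fin d → ℚ) × (Fin d → ℚ)) × ℚ × ℕ) : Bool :=
  testT d x.1.1 x.1.2 x.2.1 x.2.2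

lemma testP_eq (d : ℕ) (v w : Fin d → ℚ) (ρ : ℚ) (m : ℕ) :
    testP d ((v, w), (ρ, m)) = testT d v w ρ m := rfl

lemma computable_testT (d : ℕ) : Computable (testP d) := by
  show Computable fun x : ((Fin d → ℚ) × (Fin d → ℚ)) × ℚ × ℕ =>
      testT d x.1.1 x.1.2 x.2.1 x.2.2
  have hρ : Computable fun x : ((Fin d → ℚ) × (Fin d → ℚ)) × ℚ × ℕ =>
      tripleOf x.2.1 := computable_tripleOf.comp (Computable.fst.comp .snd)
  have hm : Computable fun x : ((Fin d → ℚ) × (Fin d → ℚ)) × ℚ × ℕ =>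
      ((0, 1, 2 ^ x.2.2) : ℕ × ℕ × ℕ) :=
    (Computable.const 0).pair ((Computable.const 1).pair
      (primrec_pow2.to_comp.comp (Computable.snd.comp .snd)))
  have hH : Computable fun x : ((Fin d → ℚ) × (Fin d → ℚ)) × ℚ × ℕ =>
      tadd (tripleOf x.2.1) (0, 1, 2 ^ x.2.2) :=
    primrec_tadd.to_comp.comp hρ hm
  have hL : Computable fun x : ((Fin d → ℚ) × (Fin d → ℚ)) × ℚ × ℕ =>
      List.ofFn fun i =>
        (fun s => tmul s s) (tadd (tripleOf (x.1.1 i)) (tneg (tripleOf (x.1.2 i)))) := by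
    apply computable_list_ofFn
    intro i
    have hv : Computable fun x : ((Fin d → ℚ) × (Fin d → ℚ)) × ℚ × ℕ => x.1.1 i :=
      Computable.fin_app.comp (Computable.fst.comp .fst) (.const i)
    have hw : Computable fun x : ((Fin d → ℚ) × (Fin d → ℚ)) × ℚ × ℕ => x.1.2 i :=
      Computable.fin_app.comp (Computable.snd.comp .fst) (.const i)
    have hs : Computable fun x : ((Fin d → ℚ) × (Fin d → ℚ)) × ℚ × ℕ =>
        tadd (tripleOf (x.1.1 i)) (tneg (tripleOf (x.1.2 i))) :=
      primrec_tadd.to_comp.comp (computable_tripleOf.comp hv)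
        (primrec_tneg.to_comp.comp (computable_tripleOf.comp hw))
    exact primrec_tmul.to_comp.comp hs hs
  have h1 : Computable fun x : ((Fin d → ℚ) × (Fin d → ℚ)) × ℚ × ℕ =>
      tlt (0, 0, 1) (tadd (tripleOf x.2.1) (0, 1, 2 ^ x.2.2)) :=
    primrec_tlt.to_comp.comp (.const (0, 0, 1)) hH
  have h2 : Computable fun x : ((Fin d → ℚ) × (Fin d → ℚ)) × ℚ × ℕ =>
      tlt (sumT (List.ofFn fun i =>
          (fun s => tmul s s) (tadd (tripleOf (x.1.1 i)) (tneg (tripleOf (x.1.2 i))))))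
        (tmul (tadd (tripleOf x.2.1) (0, 1, 2 ^ x.2.2))
          (tadd (tripleOf x.2.1) (0, 1, 2 ^ x.2.2))) :=
    primrec_tlt.to_comp.comp (primrec_sumT.to_comp.comp hL)
      (primrec_tmul.to_comp.comp hH hH)
  exact (Primrec.and.to_comp.comp h1 h2).of_eq fun x => rfl


/-! ### Part III: bridge to Euclidean space -/

lemma normsq_eq (d : ℕ) (v w : Fin d → ℚ) :
    ‖ratToPt d v - ratToPt d w‖ ^ 2 = ((∑ i, (v i - w i) ^ 2 : ℚ) : ℝ) := by
  rw [EuclideanSpace.norm_eq, Real.sq_sqrt (by positivity)]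
  push_cast
  congr 1
  funext i
  have : (ratToPt d v - ratToPt d w) i = ((v i : ℝ)) - ((w i : ℝ)) := by simp [ratToPt]
  rw [this, Real.norm_eq_abs, sq_abs]

lemma pow_neg_eq (m : ℕ) : (2 : ℝ) ^ (-(m : ℤ)) = (((2 : ℚ) ^ m)⁻¹ : ℚ) := by
  push_cast
  rw [zpow_neg, zpow_natCast]

lemma testT_norm_iff (d : ℕ) (v w : Fin d → ℚ) (ρ : ℚ) (m : ℕ) :
    testT d v w ρ m = true ↔
      (0 < (ρ : ℝ) - (2 : ℝ) ^ (-(m : ℤ)) ∧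
        ‖ratToPt d v - ratToPt d w‖ < (ρ : ℝ) - (2 : ℝ) ^ (-(m : ℤ))) := by
  rw [testT_iff]
  have hcast : ((ρ - ((2 : ℚ) ^ m)⁻¹ : ℚ) : ℝ) = (ρ : ℝ) - (2 : ℝ) ^ (-(m : ℤ)) := by
    rw [pow_neg_eq]
    push_cast
    ring
  constructor
  · rintro ⟨h1, h2⟩
    have h1' : (0 : ℝ) < (ρ : ℝ) - (2 : ℝ) ^ (-(m : ℤ)) := by
      rw [← hcast]
      exact_mod_cast h1
    refine ⟨h1', ?_⟩
    have h2' : ((∑ i, (v i - w i) ^ 2 : ℚ) : ℝ) <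
        ((ρ : ℝ) - (2 : ℝ) ^ (-(m : ℤ))) ^ 2 := by
      rw [← hcast]
      exact_mod_cast h2
    rw [← normsq_eq] at h2'
    nlinarith [norm_nonneg (ratToPt d v - ratToPt d w), h2']
  · rintro ⟨h1, h2⟩
    have h1' : (0 : ℚ) < ρ - ((2 : ℚ) ^ m)⁻¹ := by
      rw [← hcast] at h1
      exact_mod_cast h1
    refine ⟨h1', ?_⟩
    have h2' : ‖ratToPt d v - ratToPt d w‖ ^ 2 <
        ((ρ : ℝ) - (2 : ℝ) ^ (-(m : ℤ))) ^ 2 := by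
      nlinarith [norm_nonneg (ratToPt d v - ratToPt d w), h1, h2]
    rw [normsq_eq, ← hcast] at h2'
    exact_mod_cast h2'

end Stmt14Aux
set_option maxHeartbeats 2000000 in
open Stmt14Aux in
theorem stmt14 (d : ℕ) (A U : Set (EuclideanSpace ℝ (Fin d))) (hA : IsREClosed A) (hAne : A.Nonempty)
    (hU : IsREOpen U) (hclosed : IsClosed (A ∩ U)) (hne : (A ∩ U).Nonempty) :
    IsREClosed (A ∩ U) := by
  obtain ⟨hAcl, x, q, hq, hqb, hAeq⟩ := hA
  obtain ⟨c, r, hc, hr, hUeq⟩ := hU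
  have hUopen : IsOpen U := by
    rw [hUeq]; exact isOpen_iUnion fun k => Metric.isOpen_ball
  have hrangeA : Set.range x ⊆ A := hAeq ▸ subset_closure
  -- membership criterion
  have memU_of_test : ∀ n k m, testT d (q n m) (c k) (r k) m = true → x n ∈ U := by
    intro n k m ht
    obtain ⟨h1, h2⟩ := (testT_norm_iff d (q n m) (c k) (r k) m).mp ht
    have hxq := hqb n m
    have : ‖x n - ratToPt d (c k)‖ < (r k : ℝ) := by
      calc ‖x n - ratToPt d (c k)‖
          ≤ ‖x n - ratToPt d (q n m)‖ + ‖ratToPt d (q n m) - ratToPt d (c k)‖ :=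
            norm_sub_le_norm_sub_add_norm_sub _ _ _
        _ < (2 : ℝ) ^ (-(m : ℤ)) + ((r k : ℝ) - (2 : ℝ) ^ (-(m : ℤ))) := by
            apply add_lt_add_of_le_of_lt hxq h2
        _ = (r k : ℝ) := by ring
    rw [hUeq]
    exact Set.mem_iUnion.mpr ⟨k, by
      rw [Metric.mem_ball, dist_eq_norm]; exact this⟩
  have test_of_memU : ∀ n, x n ∈ U → ∃ k m, testT d (q n m) (c k) (r k) m = true := by
    intro n hn
    rw [hUeq] at hn
    obtain ⟨k, hk⟩ := Set.mem_iUnion.mp hn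
    rw [Metric.mem_ball, dist_eq_norm] at hk
    set ε : ℝ := (r k : ℝ) - ‖x n - ratToPt d (c k)‖ with hε
    have hεpos : 0 < ε := by rw [hε]; linarith
    obtain ⟨m, hm⟩ : ∃ m : ℕ, ((1 : ℝ) / 2) ^ m < ε / 3 :=
      exists_pow_lt_of_lt_one (by positivity) (by norm_num)
    have hm' : (2 : ℝ) ^ (-(m : ℤ)) < ε / 3 := by
      rw [zpow_neg, zpow_natCast]
      simpa [one_div, inv_pow] using hm
    refine ⟨k, m, (testT_norm_iff d (q n m) (c k) (r k) m).mpr ⟨?_, ?_⟩⟩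
    · have h0 : (0 : ℝ) ≤ ‖x n - ratToPt d (c k)‖ := norm_nonneg _
      have : ε ≤ (r k : ℝ) := by rw [hε]; linarith
      linarith
    · have hxq' : ‖ratToPt d (q n m) - x n‖ ≤ (2 : ℝ) ^ (-(m : ℤ)) := by
        rw [norm_sub_rev]; exact hqb n m
      have htri : ‖ratToPt d (q n m) - ratToPt d (c k)‖
          ≤ ‖ratToPt d (q n m) - x n‖ + ‖x n - ratToPt d (c k)‖ :=
        norm_sub_le_norm_sub_add_norm_sub _ _ _
      have hxn : ‖x n - ratToPt d (c k)‖ = (r k : ℝ) - ε := by rw [hε]; ring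
      linarith
  -- a base index n0 with x n0 ∈ U
  have hn0ex : ∃ n0, x n0 ∈ U := by
    obtain ⟨z, hzA, hzU⟩ := hne
    obtain ⟨δ, hδpos, hball⟩ := Metric.isOpen_iff.mp hUopen z hzU
    have hzcl : z ∈ closure (Set.range x) := hAeq ▸ hzA
    obtain ⟨y, ⟨n, rfl⟩, hy⟩ := Metric.mem_closure_iff.mp hzcl δ hδpos
    exact ⟨n, hball (by rw [Metric.mem_ball, dist_comm]; exact hy)⟩
  obtain ⟨n0, hn0⟩ := hn0ex
  -- the computable selector
  set F : ℕ → ℕ := fun t =>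
    bif testP d ((q t.unpair.1 t.unpair.2.unpair.2, c t.unpair.2.unpair.1),
        (r t.unpair.2.unpair.1, t.unpair.2.unpair.2)) then t.unpair.1 else n0 with hF
  have hFcomp : Computable F := by
    have hu1 : Computable fun t : ℕ => t.unpair.1 :=
      Computable.fst.comp Computable.unpair
    have hu2 : Computable fun t : ℕ => t.unpair.2.unpair.1 :=
      Computable.fst.comp (Computable.unpair.comp (Computable.snd.comp Computable.unpair))
    have hu3 : Computable fun t : ℕ => t.unpair.2.unpair.2 :=
      Computable.snd.comp (Computable.unpair.comp (Computable.snd.comp Computable.unpair))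
    have harg : Computable fun t : ℕ =>
        (((q t.unpair.1 t.unpair.2.unpair.2, c t.unpair.2.unpair.1) :
            (Fin d → ℚ) × (Fin d → ℚ)),
          ((r t.unpair.2.unpair.1, t.unpair.2.unpair.2) : ℚ × ℕ)) :=
      ((hq.comp hu1 hu3).pair (hc.comp hu2)).pair ((hr.comp hu2).pair hu3)
    have htest : Computable fun t : ℕ =>
        testP d ((q t.unpair.1 t.unpair.2.unpair.2, c t.unpair.2.unpair.1),
          (r t.unpair.2.unpair.1, t.unpair.2.unpair.2)) :=
      (computable_testT d).comp harg
    exact Computable.cond htest hu1 (Computable.const n0)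
  -- x (F t) is always in A ∩ U
  have hFin : ∀ t, x (F t) ∈ A ∩ U := by
    intro t
    cases ht : testP d ((q t.unpair.1 t.unpair.2.unpair.2, c t.unpair.2.unpair.1),
        (r t.unpair.2.unpair.1, t.unpair.2.unpair.2))
    · have hFt : F t = n0 := by simp only [hF, ht, cond_false]
      rw [hFt]
      exact ⟨hrangeA ⟨n0, rfl⟩, hn0⟩
    · have hFt : F t = t.unpair.1 := by simp only [hF, ht, cond_true]
      rw [hFt]
      exact ⟨hrangeA ⟨t.unpair.1, rfl⟩, memU_of_test _ _ _ ((testP_eq d _ _ _ _) ▸ ht)⟩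
  refine ⟨hclosed, x ∘ F, fun t m => q (F t) m, ?_, ?_, ?_⟩
  · exact hq.comp (hFcomp.comp Computable.fst) Computable.snd
  · intro n m
    exact hqb (F n) m
  · apply Set.Subset.antisymm
    · intro z hz
      rw [Metric.mem_closure_iff]
      intro ε hεpos
      obtain ⟨δ, hδpos, hball⟩ := Metric.isOpen_iff.mp hUopen z hz.2
      have hzcl : z ∈ closure (Set.range x) := hAeq ▸ hz.1
      have hηpos : 0 < min ε δ := lt_min hεpos hδpos
      obtain ⟨y, ⟨n, rfl⟩, hy⟩ := Metric.mem_closure_iff.mp hzcl _ hηpos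
      have hxU : x n ∈ U := hball (by
        rw [Metric.mem_ball, dist_comm]
        exact lt_of_lt_of_le hy (min_le_right _ _))
      obtain ⟨k, m, htest⟩ := test_of_memU n hxU
      refine ⟨(x ∘ F) (Nat.pair n (Nat.pair k m)), ⟨Nat.pair n (Nat.pair k m), rfl⟩, ?_⟩
      have hFt : F (Nat.pair n (Nat.pair k m)) = n := by
        simp only [hF, Nat.unpair_pair, testP_eq, htest, cond_true]
      show dist z (x (F (Nat.pair n (Nat.pair k m)))) < ε
      rw [hFt]
      exact lt_of_lt_of_le hy (min_le_left _ _)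
    · exact closure_minimal (by rintro _ ⟨t, rfl⟩; exact hFin t) hclosed
end

section
/- Let A ⊆ ℝ^d be a nonempty compact set such that no connected component of A is open in the subspace topology of A. Then the set of connected components of A, i.e. {connectedComponentIn A x : x ∈ A}, has cardinality equal to the cardinality of the continuum. -/
open Set

-- splitting lemma
theorem aux_split {X : Type} [TopologicalSpace X] [CompactSpace X] [T2Space X]
    (h : ∀ x : X, ¬ IsOpen (connectedComponent x))
    (K : Set X) (hK : IsClopen K) (hne : K.Nonempty) :
    ∃ L : Set X, IsClopen L ∧ L ⊆ K ∧ L.Nonempty ∧ (K \ L).Nonempty := by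
  obtain ⟨x, hx⟩ := hne
  have hy : ∃ y ∈ K, y ∉ connectedComponent x := by
    by_contra h'
    push_neg at h'
    have h2 : connectedComponent x ⊆ K := hK.connectedComponent_subset hx
    have : connectedComponent x = K := subset_antisymm h2 h'
    exact h x (this ▸ hK.isOpen)
  obtain ⟨y, hyK, hy⟩ := hy
  rw [connectedComponent_eq_iInter_isClopen, mem_iInter] at hy
  push_neg at hy
  obtain ⟨⟨Z, hZ, hxZ⟩, hyZ⟩ := hy
  exact ⟨K ∩ Z, hK.inter hZ, inter_subset_left, ⟨x, hx, hxZ⟩,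
    ⟨y, hyK, fun hc => hyZ hc.2⟩⟩

theorem aux_lower {X : Type} [TopologicalSpace X] [CompactSpace X] [T2Space X] [Nonempty X]
    (h : ∀ x : X, ¬ IsOpen (connectedComponent x)) :
    Cardinal.continuum ≤ Cardinal.mk {C : Set X | ∃ x, C = connectedComponent x} := by
  classical
  -- splitting function
  set spl : Set X → Set X := fun K =>
    if hc : IsClopen K ∧ K.Nonempty then (aux_split h K hc.1 hc.2).choose else ∅ with hspl
  have spl_spec : ∀ K : Set X, IsClopen K → K.Nonempty →
      IsClopen (spl K) ∧ spl K ⊆ K ∧ (spl K).Nonempty ∧ (K \ spl K).Nonempty := by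
    intro K h1 h2
    simp only [hspl, dif_pos (And.intro h1 h2)]
    exact (aux_split h K h1 h2).choose_spec
  -- Cantor scheme
  set F : (ℕ → Bool) → ℕ → Set X := fun f =>
    Nat.rec Set.univ (fun n K => if f n then spl K else K \ spl K) with hF
  have Fzero : ∀ f, F f 0 = Set.univ := fun f => rfl
  have Fsucc : ∀ f n, F f (n + 1) = if f n then spl (F f n) else F f n \ spl (F f n) :=
    fun f n => rfl
  have Fprop : ∀ (f : ℕ → Bool) n, IsClopen (F f n) ∧ (F f n).Nonempty := by
    intro f n
    induction n with
    | zero => exact ⟨isClopen_univ, univ_nonempty⟩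
    | succ n ih =>
      obtain ⟨h1, h2⟩ := ih
      obtain ⟨s1, s2, s3, s4⟩ := spl_spec _ h1 h2
      rw [Fsucc]
      cases f n <;> simp only [if_true, if_false, Bool.false_eq_true]
      · exact ⟨h1.diff s1, s4⟩
      · exact ⟨s1, s3⟩
  have Fmono : ∀ (f : ℕ → Bool) n, F f (n + 1) ⊆ F f n := by
    intro f n
    obtain ⟨h1, h2⟩ := Fprop f n
    obtain ⟨s1, s2, s3, s4⟩ := spl_spec _ h1 h2
    rw [Fsucc]
    cases f n <;> simp only [if_true, if_false, Bool.false_eq_true]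
    · exact diff_subset
    · exact s2
  have Fcongr : ∀ (f g : ℕ → Bool) n, (∀ m < n, f m = g m) → F f n = F g n := by
    intro f g n
    induction n with
    | zero => intro _; rfl
    | succ n ih =>
      intro hagree
      have h1 : F f n = F g n := ih (fun m hm => hagree m (Nat.lt_succ_of_lt hm))
      rw [Fsucc, Fsucc, h1, hagree n (Nat.lt_succ_self n)]
  have Fdisj : ∀ (f g : ℕ → Bool) n, f n ≠ g n → (∀ m < n, f m = g m) →
      Disjoint (F f (n + 1)) (F g (n + 1)) := by
    intro f g n hn hagree
    have hKe : F f n = F g n := Fcongr f g n hagree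
    rw [Set.disjoint_iff_inter_eq_empty]
    rw [Fsucc, Fsucc, ← hKe]
    cases hf : f n <;> cases hg : g n
    · exact absurd (hf.trans hg.symm) hn
    · simp only [hf, hg, if_true, Bool.false_eq_true, if_false]
      exact diff_inter_self
    · simp only [hf, hg, if_true, Bool.false_eq_true, if_false]
      rw [Set.inter_comm]; exact diff_inter_self
    · exact absurd (hf.trans hg.symm) hn
  -- pick points
  have hpt : ∀ f : ℕ → Bool, (⋂ n, F f n).Nonempty := by
    intro f
    apply IsCompact.nonempty_iInter_of_sequence_nonempty_isCompact_isClosed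
    · exact Fmono f
    · exact fun n => (Fprop f n).2
    · exact (Fprop f 0).1.isClosed.isCompact
    · exact fun n => (Fprop f n).1.isClosed
  set pt : (ℕ → Bool) → X := fun f => (hpt f).choose with hptdef
  have hptmem : ∀ f n, pt f ∈ F f n := fun f n => mem_iInter.1 (hpt f).choose_spec n
  -- injection
  have hinj : Function.Injective
      (fun f : ℕ → Bool => (⟨connectedComponent (pt f), pt f, rfl⟩ :
        {C : Set X | ∃ x, C = connectedComponent x})) := by
    intro f g hfg
    by_contra hne
    have hex : ∃ n, f n ≠ g n := by
      by_contra h'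
      push_neg at h'
      exact hne (funext h')
    set n := Nat.find hex with hn
    have h1 : f n ≠ g n := Nat.find_spec hex
    have h2 : ∀ m < n, f m = g m := fun m hm => by
      by_contra hc; exact Nat.find_min hex hm hc
    have hd := Fdisj f g n h1 h2
    have hcc : connectedComponent (pt f) = connectedComponent (pt g) :=
      congrArg Subtype.val hfg
    have hsubf : connectedComponent (pt f) ⊆ F f (n + 1) :=
      (Fprop f (n + 1)).1.connectedComponent_subset (hptmem f (n + 1))
    have hsubg : connectedComponent (pt g) ⊆ F g (n + 1) :=
      (Fprop g (n + 1)).1.connectedComponent_subset (hptmem g (n + 1))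
    have : pt f ∈ F g (n + 1) := hsubg (hcc ▸ mem_connectedComponent)
    exact hd.ne_of_mem (hptmem f (n + 1)) this rfl
  calc Cardinal.continuum = Cardinal.mk (ℕ → Bool) := by
        rw [Cardinal.mk_arrow]
        simp [Cardinal.mk_bool, Cardinal.mk_nat, Cardinal.two_power_aleph0]
    _ ≤ _ := Cardinal.mk_le_of_injective hinj


theorem stmt15 (d : ℕ) (A : Set (EuclideanSpace ℝ (Fin d))) (hne : A.Nonempty) (hcomp : IsCompact A)
    (hnoopen : ∀ x ∈ A, ¬ ∃ V : Set (EuclideanSpace ℝ (Fin d)), IsOpen V ∧ connectedComponentIn A x = A ∩ V) :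
    Cardinal.mk {C : Set (EuclideanSpace ℝ (Fin d)) | ∃ x ∈ A, C = connectedComponentIn A x} =
      Cardinal.continuum := by
  classical
  haveI : CompactSpace ↥A := isCompact_iff_compactSpace.mp hcomp
  haveI : Nonempty ↥A := hne.to_subtype
  have h : ∀ x : ↥A, ¬ IsOpen (connectedComponent x) := by
    rintro ⟨x, hx⟩ hopen
    apply hnoopen x hx
    rw [isOpen_induced_iff] at hopen
    obtain ⟨V, hV, hpre⟩ := hopen
    refine ⟨V, hV, ?_⟩
    rw [connectedComponentIn_eq_image hx, ← hpre, Subtype.image_preimage_coe]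
  apply le_antisymm
  · -- upper bound
    have hsurj : Function.Surjective
        (fun a : ↥A => (⟨connectedComponentIn A a, a, a.2, rfl⟩ :
          {C : Set (EuclideanSpace ℝ (Fin d)) | ∃ x ∈ A, C = connectedComponentIn A x})) := by
      rintro ⟨C, x, hx, rfl⟩
      exact ⟨⟨x, hx⟩, rfl⟩
    have h1 : Cardinal.mk {C : Set (EuclideanSpace ℝ (Fin d)) | ∃ x ∈ A, C = connectedComponentIn A x}
        ≤ Cardinal.mk ↥A := Cardinal.mk_le_of_surjective hsurj
    have h2 : Cardinal.mk ↥A ≤ Cardinal.mk (EuclideanSpace ℝ (Fin d)) := Cardinal.mk_set_le A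
    have h3 : Cardinal.mk (EuclideanSpace ℝ (Fin d)) = Cardinal.mk (Fin d → ℝ) :=
      Cardinal.mk_congr (WithLp.equiv 2 _)
    have h4 : Cardinal.mk (Fin d → ℝ) ≤ Cardinal.continuum := by
      rw [Cardinal.mk_arrow, Cardinal.mk_real, Cardinal.mk_fin, Cardinal.lift_id,
        Cardinal.lift_natCast]
      exact (Cardinal.power_le_power_left Cardinal.continuum_ne_zero
        (Cardinal.nat_lt_aleph0 d).le).trans_eq Cardinal.continuum_power_aleph0
    exact h1.trans (h2.trans (h3 ▸ h4))
  · -- lower bound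
    refine (aux_lower h).trans (Cardinal.mk_le_of_injective (f := fun C =>
      ⟨Subtype.val '' C.1, by
        obtain ⟨C, x, rfl⟩ := C
        exact ⟨x, x.2, by rw [connectedComponentIn_eq_image x.2, Subtype.coe_eta]⟩⟩) ?_)
    rintro ⟨C1, h1⟩ ⟨C2, h2⟩ hc
    have := congrArg Subtype.val hc
    simp only at this
    exact Subtype.ext (Subtype.val_injective.image_injective this)
end

section
/- Let A ⊆ ℝ^d be a nonempty compact co-r.e. closed set with at most countably many connected components (i.e., the set {connectedComponentIn A x : x ∈ A} is countable). Then at least one connected component of A is a co-r.e. closed set. -/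
lemma ratApprox {d : ℕ} (x : EuclideanSpace ℝ (Fin d)) {ε : ℝ} (hε : 0 < ε) :
    ∃ q : Fin d → ℚ, dist x (ratToPt d q) < ε := by
  have hd : (0:ℝ) < d + 1 := by positivity
  have h : ∀ i : Fin d, ∃ q : ℚ, dist (x i) ((q:ℝ)) < ε / (d+1) := by
    intro i
    have hpos : 0 < ε/(d+1) := by positivity
    obtain ⟨q, hq1, hq2⟩ := exists_rat_btwn (show x i < x i + ε/(d+1) by linarith)
    exact ⟨q, by rw [Real.dist_eq, abs_lt]; constructor <;> linarith⟩
  choose q hq using h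
  refine ⟨q, ?_⟩
  rw [EuclideanSpace.dist_eq]
  have hsum : (∑ i, dist (x i) ((q i : ℝ)) ^ 2) ≤ d * (ε/(d+1))^2 := by
    calc (∑ i, dist (x i) ((q i : ℝ)) ^ 2) ≤ ∑ _i : Fin d, (ε/(d+1))^2 := by
          apply Finset.sum_le_sum
          intro i _
          exact pow_le_pow_left₀ dist_nonneg (le_of_lt (hq i)) 2
      _ = d * (ε/(d+1))^2 := by simp [Finset.sum_const, nsmul_eq_mul]
  have hlt : (∑ i, dist (x i) ((q i : ℝ)) ^ 2) < ε ^ 2 := by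
    apply lt_of_le_of_lt hsum
    have : (d:ℝ) * (ε/(d+1))^2 < (d+1) * (ε/(d+1))^2 := by
      apply mul_lt_mul_of_pos_right (by linarith) (by positivity)
    apply lt_of_lt_of_le this
    rw [div_pow, mul_div_assoc', div_le_iff₀ (by positivity)]
    nlinarith [mul_nonneg (sq_nonneg ε) (mul_nonneg hd.le (Nat.cast_nonneg d : (0:ℝ) ≤ d))]
  have hr : ∀ i, (ratToPt d q) i = (q i : ℝ) := fun i => rfl
  simp only [hr]
  calc √(∑ i, dist (x i) ((q i : ℝ)) ^ 2) < √(ε^2) := by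
        exact Real.sqrt_lt_sqrt (by positivity) hlt
    _ = ε := by rw [Real.sqrt_sq hε.le]

lemma reopen_union_ball {d : ℕ} {U : Set (EuclideanSpace ℝ (Fin d))} (hU : IsREOpen U)
    (q : Fin d → ℚ) (r : ℚ) :
    IsREOpen (Metric.ball (ratToPt d q) (r:ℝ) ∪ U) := by
  obtain ⟨c, rr, hc, hrr, hUe⟩ := hU
  refine ⟨fun n => Nat.casesOn n q (fun m => c m), fun n => Nat.casesOn n r (fun m => rr m),
    ?_, ?_, ?_⟩
  · exact Computable.nat_casesOn Computable.id (Computable.const q) (hc.comp Computable.snd)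
  · exact Computable.nat_casesOn Computable.id (Computable.const r) (hrr.comp Computable.snd)
  · rw [hUe]
    ext x
    simp only [Set.mem_union, Set.mem_iUnion]
    constructor
    · rintro (h | ⟨n, h⟩)
      · exact ⟨0, h⟩
      · exact ⟨n+1, h⟩
    · rintro ⟨n, h⟩
      cases n with
      | zero => exact Or.inl h
      | succ m => exact Or.inr ⟨m, h⟩

lemma reopen_union_finset {d : ℕ} {U : Set (EuclideanSpace ℝ (Fin d))} (hU : IsREOpen U)
    {ι : Type*} [DecidableEq ι] (t : Finset ι) (qf : ι → (Fin d → ℚ)) (rf : ι → ℚ) :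
    IsREOpen (U ∪ ⋃ i ∈ t, Metric.ball (ratToPt d (qf i)) ((rf i : ℝ))) := by
  induction t using Finset.induction with
  | empty => simpa using hU
  | insert a s hni ih =>
    have : (U ∪ ⋃ i ∈ insert a s, Metric.ball (ratToPt d (qf i)) ((rf i : ℝ)))
        = Metric.ball (ratToPt d (qf a)) ((rf a : ℝ))
          ∪ (U ∪ ⋃ i ∈ s, Metric.ball (ratToPt d (qf i)) ((rf i : ℝ))) := by
      rw [Finset.set_biUnion_insert]
      rw [Set.union_left_comm]
    rw [this]
    exact reopen_union_ball ih _ _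

theorem stmt16 (d : ℕ) (A : Set (EuclideanSpace ℝ (Fin d))) (hne : A.Nonempty) (hcomp : IsCompact A)
    (hA : IsCoREClosed A)
    (hcount : {C : Set (EuclideanSpace ℝ (Fin d)) | ∃ x ∈ A, C = connectedComponentIn A x}.Countable) :
    ∃ x ∈ A, IsCoREClosed (connectedComponentIn A x) := by
  haveI := Classical.decEq (EuclideanSpace ℝ (Fin d))
  have hXopen : ∃ x₀ : A, IsOpen (connectedComponent x₀) := by
    haveI : CompactSpace A := isCompact_iff_compactSpace.mp hcomp
    haveI : Nonempty A := hne.to_subtype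
    haveI : CompactSpace (ConnectedComponents A) := Quotient.compactSpace
    haveI : T2Space (ConnectedComponents A) := ConnectedComponents.t2
    haveI : Nonempty (ConnectedComponents A) := Nonempty.map ConnectedComponents.mk ‹Nonempty A›
    haveI : Countable (ConnectedComponents A) := by
      haveI := hcount.to_subtype
      apply Function.Injective.countable
        (f := fun c : ConnectedComponents A =>
          (⟨Subtype.val '' (ConnectedComponents.mk ⁻¹' {c}),
            by
              obtain ⟨x, rfl⟩ := ConnectedComponents.surjective_coe c
              refine ⟨x.1, x.2, ?_⟩
              rw [connectedComponents_preimage_singleton,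
                connectedComponentIn_eq_image x.2]⟩ :
            {C : Set (EuclideanSpace ℝ (Fin d)) | ∃ x ∈ A, C = connectedComponentIn A x}))
      intro c₁ c₂ h
      simp only [Subtype.mk.injEq] at h
      have h2 : (ConnectedComponents.mk ⁻¹' {c₁} : Set A) = ConnectedComponents.mk ⁻¹' {c₂} :=
        (Set.image_injective.mpr Subtype.val_injective) h
      obtain ⟨x, rfl⟩ := ConnectedComponents.surjective_coe c₁
      have : x ∈ (ConnectedComponents.mk ⁻¹' {c₂} : Set A) := by
        rw [← h2, connectedComponents_preimage_singleton]; exact mem_connectedComponent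
      simpa using this
    obtain ⟨c, hc⟩ := nonempty_interior_of_iUnion_of_closed
      (f := fun c : ConnectedComponents A => ({c} : Set (ConnectedComponents A)))
      (fun c => isClosed_singleton) (by ext y; simp)
    have hopen : IsOpen ({c} : Set (ConnectedComponents A)) := by
      obtain ⟨y, hy⟩ := hc
      have : y = c := by have h := interior_subset hy; simpa using h
      subst this
      have : interior ({y} : Set (ConnectedComponents A)) = {y} :=
        Set.Subset.antisymm interior_subset (Set.singleton_subset_iff.mpr hy)
      rw [← this]; exact isOpen_interior
    obtain ⟨x₀, rfl⟩ := ConnectedComponents.surjective_coe c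
    refine ⟨x₀, ?_⟩
    rw [← connectedComponents_preimage_singleton]
    exact hopen.preimage ConnectedComponents.continuous_coe
  haveI : CompactSpace A := isCompact_iff_compactSpace.mp hcomp
  obtain ⟨x₀, hopen⟩ := hXopen
  set C' : Set (EuclideanSpace ℝ (Fin d)) := connectedComponentIn A ↑x₀ with hC'
  have hCim : C' = Subtype.val '' connectedComponent x₀ := by
    rw [hC', connectedComponentIn_eq_image x₀.2]
  have hCcomp : IsCompact C' := by
    rw [hCim]
    exact (isClosed_connectedComponent.isCompact).image continuous_subtype_val
  have hclosed : IsClosed C' := hCcomp.isClosed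
  set K : Set (EuclideanSpace ℝ (Fin d)) := A \ C' with hKdef
  have hKim : K = Subtype.val '' (connectedComponent x₀)ᶜ := by
    ext z
    constructor
    · rintro ⟨hzA, hz⟩
      exact ⟨⟨z, hzA⟩, fun hmem => hz (hCim ▸ ⟨⟨z, hzA⟩, hmem, rfl⟩), rfl⟩
    · rintro ⟨w, hw, rfl⟩
      refine ⟨w.2, fun hz => hw ?_⟩
      rw [hCim] at hz
      obtain ⟨u, hu, huw⟩ := hz
      rwa [← Subtype.val_injective huw]
  have hKcomp : IsCompact K := by
    rw [hKim]
    exact ((hopen.isClosed_compl).isCompact).image continuous_subtype_val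
  have hKsub : K ⊆ C'ᶜ := fun z hz => hz.2
  obtain ⟨δ, hδ, hth⟩ := hKcomp.exists_thickening_subset_open hclosed.isOpen_compl hKsub
  have hball : ∀ y ∈ K, ∃ (q : Fin d → ℚ) (ρ : ℚ),
      y ∈ Metric.ball (ratToPt d q) (ρ : ℝ) ∧ Metric.ball (ratToPt d q) (ρ : ℝ) ⊆ C'ᶜ := by
    intro y hy
    obtain ⟨q, hq⟩ := ratApprox y (show (0:ℝ) < δ/4 by linarith)
    obtain ⟨ρ, hρ1, hρ2⟩ := exists_rat_btwn (show δ/4 < δ/2 by linarith)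
    refine ⟨q, ρ, ?_, ?_⟩
    · rw [Metric.mem_ball]
      exact lt_trans hq hρ1
    · intro z hz
      apply hth
      apply Metric.ball_subset_thickening hy δ
      rw [Metric.mem_ball] at hz ⊢
      have : dist z y ≤ dist z (ratToPt d q) + dist (ratToPt d q) y :=
        dist_triangle _ _ _
      rw [dist_comm (ratToPt d q) y] at this
      linarith
  choose q ρ h1 h2 using hball
  obtain ⟨t, ht⟩ := hKcomp.elim_nhds_subcover'
    (fun y hy => Metric.ball (ratToPt d (q y hy)) ((ρ y hy : ℝ)))
    (fun y hy => Metric.isOpen_ball.mem_nhds (h1 y hy))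
  have hCeq : C'ᶜ = Aᶜ ∪ ⋃ y ∈ t, Metric.ball (ratToPt d (q y.1 y.2)) ((ρ y.1 y.2 : ℝ)) := by
    ext z
    constructor
    · intro hz
      by_cases hzA : z ∈ A
      · right
        have : z ∈ K := ⟨hzA, hz⟩
        have := ht this
        simpa using this
      · exact Or.inl hzA
    · rintro (h | h)
      · exact fun hzC => h (connectedComponentIn_subset _ _ hzC)
      · simp only [Set.mem_iUnion] at h
        obtain ⟨y, hy, hball⟩ := h
        exact h2 y.1 y.2 hball
  refine ⟨↑x₀, x₀.2, hclosed, ?_⟩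
  show IsREOpen C'ᶜ
  rw [hCeq]
  haveI := Classical.decEq (↥K)
  exact reopen_union_finset hA.2 t (fun y => q y.1 y.2) (fun y => ρ y.1 y.2)
end
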